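/- arXiv:2008.07820 — 12 statements merged into one kernel-verified Lean document; each statement's English description precedes it below -/
import Mathlib

section
/- The distributionally robust Bellman operator T is a γ-contraction with respect to the supremum norm: for all V, V' : S → ℝ, max_{s∈S} |(T V)(s) − (T V')(s)| ≤ γ · max_{s∈S} |V(s) − V'(s)|. -/
open MeasureTheory

private lemma integrable_finset_sup' {α ι : Type*} [MeasurableSpace α]
    {μ : Measure α} (t : Finset ι) (ht : t.Nonempty) (f : ι → α → ℝ)
    (hf : ∀ i ∈ t, Integrable (f i) μ) :
    Integrable (fun x => t.sup' ht (fun i => f i x)) μ := by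
  revert hf
  induction ht using Finset.Nonempty.cons_induction with
  | singleton i =>
    intro hf
    exact hf i (by simp)
  | cons i t hit htne ih =>
    intro hf
    simp only [Finset.sup'_cons htne]
    exact (hf i (by simp)).sup (ih fun j hj => hf j (by simp [hj]))

/-- The distributionally robust Bellman operator:
`(T V)(s) = sup_{d ∈ Ξ s} ∫ max_{a ∈ A} ( r s a + ε a + γ Σ_{s'} q s a s' · V s' ) dd(ε)`. -/
noncomputable def bellmanDS {S A : Type*} [Fintype S] [Fintype A] [Nonempty A]
    (r : S → A → ℝ) (q : S → A → S → ℝ) (γ : ℝ)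
    (Ξ : S → Set (Measure (A → ℝ))) (V : S → ℝ) (s : S) : ℝ :=
  sSup ((fun d : Measure (A → ℝ) =>
    ∫ ε, (Finset.univ.sup' Finset.univ_nonempty
      (fun a : A => r s a + ε a + γ * ∑ s', q s a s' * V s')) ∂d) '' Ξ s)

private lemma bellman_le {S A : Type*} [Fintype S] [Nonempty S] [Fintype A] [Nonempty A]
    (r : S → A → ℝ) (q : S → A → S → ℝ)
    (hq0 : ∀ s a s', 0 ≤ q s a s') (hq1 : ∀ s a, ∑ s', q s a s' = 1)
    (γ : ℝ) (hγ0 : 0 ≤ γ)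
    (Ξ : S → Set (Measure (A → ℝ)))
    (hne : ∀ s, (Ξ s).Nonempty)
    (hprob : ∀ s, ∀ d ∈ Ξ s, IsProbabilityMeasure d)
    (hint : ∀ s, ∀ d ∈ Ξ s, ∀ a : A, Integrable (fun ε : A → ℝ => ε a) d)
    (hbdd : ∀ s, ∃ M : ℝ, ∀ d ∈ Ξ s,
      ∫ ε, (Finset.univ.sup' Finset.univ_nonempty (fun a : A => ε a)) ∂d ≤ M)
    (V V' : S → ℝ) (s : S) :
    bellmanDS r q γ Ξ V s ≤ bellmanDS r q γ Ξ V' s +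
      γ * Finset.univ.sup' Finset.univ_nonempty (fun s : S => |V s - V' s|) := by
  set K := Finset.univ.sup' Finset.univ_nonempty (fun s : S => |V s - V' s|) with hK
  -- integrability of the integrand for any d ∈ Ξ s and any W
  have hintW : ∀ (W : S → ℝ), ∀ d ∈ Ξ s, Integrable (fun ε : A → ℝ =>
      Finset.univ.sup' Finset.univ_nonempty
        (fun a : A => r s a + ε a + γ * ∑ s', q s a s' * W s')) d := by
    intro W d hd
    haveI := hprob s d hd
    exact integrable_finset_sup' _ _ _ (fun a _ =>
      (((integrable_const (r s a)).add (hint s d hd a)).add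
        (integrable_const (γ * ∑ s', q s a s' * W s'))))
  have hintSup : ∀ d ∈ Ξ s, Integrable (fun ε : A → ℝ =>
      Finset.univ.sup' Finset.univ_nonempty (fun a : A => ε a)) d := by
    intro d hd
    exact integrable_finset_sup' _ _ _ (fun a _ => hint s d hd a)
  -- bounded above of image for V'
  obtain ⟨M, hM⟩ := hbdd s
  set C := Finset.univ.sup' Finset.univ_nonempty
      (fun a : A => r s a + γ * ∑ s', q s a s' * V' s') with hC
  have hbddV' : BddAbove ((fun d : Measure (A → ℝ) =>
      ∫ ε, (Finset.univ.sup' Finset.univ_nonempty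
        (fun a : A => r s a + ε a + γ * ∑ s', q s a s' * V' s')) ∂d) '' Ξ s) := by
    refine ⟨M + C, ?_⟩
    rintro x ⟨d, hd, rfl⟩
    haveI := hprob s d hd
    have hle : ∀ ε : A → ℝ,
        (Finset.univ.sup' Finset.univ_nonempty
          (fun a : A => r s a + ε a + γ * ∑ s', q s a s' * V' s')) ≤
        (Finset.univ.sup' Finset.univ_nonempty (fun a : A => ε a)) + C := by
      intro ε
      apply Finset.sup'_le
      intro a _
      have h1 : ε a ≤ Finset.univ.sup' Finset.univ_nonempty (fun a : A => ε a) :=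
        Finset.le_sup' (fun a : A => ε a) (Finset.mem_univ a)
      have h2 : r s a + γ * ∑ s', q s a s' * V' s' ≤ C := by
        rw [hC]
        exact Finset.le_sup' (fun a : A => r s a + γ * ∑ s', q s a s' * V' s')
          (Finset.mem_univ a)
      linarith
    calc ∫ ε, (Finset.univ.sup' Finset.univ_nonempty
          (fun a : A => r s a + ε a + γ * ∑ s', q s a s' * V' s')) ∂d
        ≤ ∫ ε, ((Finset.univ.sup' Finset.univ_nonempty (fun a : A => ε a)) + C) ∂d := by
          exact integral_mono (hintW V' d hd) ((hintSup d hd).add (integrable_const C)) hle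
      _ = (∫ ε, (Finset.univ.sup' Finset.univ_nonempty (fun a : A => ε a)) ∂d) + C := by
          rw [integral_add (hintSup d hd) (integrable_const C), integral_const]
          simp
      _ ≤ M + C := by linarith [hM d hd]
  -- main bound
  have hKnn : 0 ≤ K := by
    rw [hK]
    exact le_trans (abs_nonneg (V (Classical.arbitrary S) - V' (Classical.arbitrary S)))
      (Finset.le_sup' (fun s : S => |V s - V' s|) (Finset.mem_univ (Classical.arbitrary S)))
  refine csSup_le ((hne s).image _) ?_
  rintro x ⟨d, hd, rfl⟩
  haveI := hprob s d hd
  have hle : ∀ ε : A → ℝ,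
      (Finset.univ.sup' Finset.univ_nonempty
        (fun a : A => r s a + ε a + γ * ∑ s', q s a s' * V s')) ≤
      (Finset.univ.sup' Finset.univ_nonempty
        (fun a : A => r s a + ε a + γ * ∑ s', q s a s' * V' s')) + γ * K := by
    intro ε
    apply Finset.sup'_le
    intro a _
    have hdiff : ∑ s', q s a s' * V s' ≤ (∑ s', q s a s' * V' s') + K := by
      have : ∑ s', q s a s' * V s' - ∑ s', q s a s' * V' s'
          = ∑ s', q s a s' * (V s' - V' s') := by
        rw [← Finset.sum_sub_distrib]; congr 1; ext s'; ring
      have hsum : ∑ s', q s a s' * (V s' - V' s') ≤ ∑ s', q s a s' * K := by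
        apply Finset.sum_le_sum
        intro s' _
        have h1 : V s' - V' s' ≤ |V s' - V' s'| := le_abs_self _
        have h2 : |V s' - V' s'| ≤ K := by
          rw [hK]; exact Finset.le_sup' (fun s : S => |V s - V' s|) (Finset.mem_univ s')
        exact mul_le_mul_of_nonneg_left (h1.trans h2) (hq0 s a s')
      have hsumK : ∑ s', q s a s' * K = K := by
        rw [← Finset.sum_mul, hq1 s a, one_mul]
      linarith
    have h2 : r s a + ε a + γ * ∑ s', q s a s' * V' s' ≤
        Finset.univ.sup' Finset.univ_nonempty
          (fun a : A => r s a + ε a + γ * ∑ s', q s a s' * V' s') :=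
      Finset.le_sup' (fun a : A => r s a + ε a + γ * ∑ s', q s a s' * V' s') (Finset.mem_univ a)
    have h3 : γ * ∑ s', q s a s' * V s' ≤ γ * ((∑ s', q s a s' * V' s') + K) :=
      mul_le_mul_of_nonneg_left hdiff hγ0
    have h4 : γ * ((∑ s', q s a s' * V' s') + K)
        = γ * (∑ s', q s a s' * V' s') + γ * K := by ring
    linarith
  calc ∫ ε, (Finset.univ.sup' Finset.univ_nonempty
        (fun a : A => r s a + ε a + γ * ∑ s', q s a s' * V s')) ∂d
      ≤ ∫ ε, ((Finset.univ.sup' Finset.univ_nonempty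
        (fun a : A => r s a + ε a + γ * ∑ s', q s a s' * V' s')) + γ * K) ∂d :=
        integral_mono (hintW V d hd) ((hintW V' d hd).add (integrable_const _)) hle
    _ = (∫ ε, (Finset.univ.sup' Finset.univ_nonempty
        (fun a : A => r s a + ε a + γ * ∑ s', q s a s' * V' s')) ∂d) + γ * K := by
        rw [integral_add (hintW V' d hd) (integrable_const _), integral_const]
        simp
    _ ≤ bellmanDS r q γ Ξ V' s + γ * K := by
        have := le_csSup hbddV' (Set.mem_image_of_mem _ hd)
        exact add_le_add this le_rfl
  
/-- the operator is a γ-contraction in sup norm. -/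
theorem bellmanDS_contraction {S A : Type*} [Fintype S] [Nonempty S] [Fintype A] [Nonempty A]
    (r : S → A → ℝ) (q : S → A → S → ℝ)
    (hq0 : ∀ s a s', 0 ≤ q s a s') (hq1 : ∀ s a, ∑ s', q s a s' = 1)
    (γ : ℝ) (hγ0 : 0 ≤ γ) (hγ1 : γ < 1)
    (Ξ : S → Set (Measure (A → ℝ)))
    (hne : ∀ s, (Ξ s).Nonempty)
    (hprob : ∀ s, ∀ d ∈ Ξ s, IsProbabilityMeasure d)
    (hint : ∀ s, ∀ d ∈ Ξ s, ∀ a : A, Integrable (fun ε : A → ℝ => ε a) d)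
    (hbdd : ∀ s, ∃ M : ℝ, ∀ d ∈ Ξ s,
      ∫ ε, (Finset.univ.sup' Finset.univ_nonempty (fun a : A => ε a)) ∂d ≤ M)
    (V V' : S → ℝ) :
    Finset.univ.sup' Finset.univ_nonempty
        (fun s : S => |bellmanDS r q γ Ξ V s - bellmanDS r q γ Ξ V' s|) ≤
      γ * Finset.univ.sup' Finset.univ_nonempty (fun s : S => |V s - V' s|) := by
  apply Finset.sup'_le
  intro s _
  have h1 := bellman_le r q hq0 hq1 γ hγ0 Ξ hne hprob hint hbdd V V' s
  have h2 := bellman_le r q hq0 hq1 γ hγ0 Ξ hne hprob hint hbdd V' V s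
  have hsym : Finset.univ.sup' Finset.univ_nonempty (fun s : S => |V' s - V s|)
      = Finset.univ.sup' Finset.univ_nonempty (fun s : S => |V s - V' s|) := by
    congr 1; ext s; rw [abs_sub_comm]
  rw [hsym] at h2
  rw [abs_sub_le_iff]
  constructor <;> linarith
end

section
/- The function φ(w) = ∫ max_{a∈A} (w a + ε a) dd(ε) is a finite convex function on ℝ^A. Moreover, if w₀ ∈ ℝ^A is such that for d-almost every ε the maximum over a ∈ A of w₀ a + ε a is attained at a unique a, then φ is differentiable at w₀ and for every a ∈ A the partial derivative satisfies ∂φ/∂w_a (w₀) = d({ε : w₀ a + ε a > w₀ b + ε b for all b ≠ a}); in particular the optimal choice probabilities of the stochastic maximization problem are the gradient of φ at w₀. -/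
open MeasureTheory Filter Topology

namespace EMaux

variable {A : Type*} [Fintype A] [Nonempty A] [DecidableEq A]

noncomputable def g (w ε : A → ℝ) : ℝ :=
  Finset.univ.sup' Finset.univ_nonempty (fun a : A => w a + ε a)

lemma g_meas (w : A → ℝ) : Measurable (g w) := by
  have : g w = Finset.univ.sup' Finset.univ_nonempty
      (fun a : A => fun ε : A → ℝ => w a + ε a) := by
    funext ε
    rw [Finset.sup'_apply]
    rfl
  rw [this]
  exact Finset.measurable_sup' _ (fun a _ => by fun_prop)

lemma abs_g_le (w ε : A → ℝ) : |g w ε| ≤ ∑ a : A, (|w a| + |ε a|) := by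
  obtain ⟨a, -, ha⟩ := Finset.exists_mem_eq_sup' (Finset.univ_nonempty (α := A))
    (fun a : A => w a + ε a)
  rw [g, ha]
  calc |w a + ε a| ≤ |w a| + |ε a| := abs_add_le _ _
    _ ≤ ∑ b : A, (|w b| + |ε b|) :=
      Finset.single_le_sum (f := fun b : A => |w b| + |ε b|)
        (fun b _ => by positivity) (Finset.mem_univ a)

lemma g_integrable {d : Measure (A → ℝ)} [IsProbabilityMeasure d]
    (hint : ∀ a : A, Integrable (fun ε : A → ℝ => ε a) d) (w : A → ℝ) :
    Integrable (g w) d := by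
  have hb : Integrable (fun ε : A → ℝ => ∑ a : A, (|w a| + |ε a|)) d :=
    integrable_finset_sum _ fun a _ => (integrable_const _).add (hint a).abs
  exact hb.mono' (g_meas w).aestronglyMeasurable
    (Filter.Eventually.of_forall fun ε => by
      simpa [Real.norm_eq_abs] using abs_g_le w ε)

lemma g_le (w w' ε : A → ℝ) : g w ε ≤ g w' ε + ‖w - w'‖ := by
  apply Finset.sup'_le
  intro a _
  have h1 : w' a + ε a ≤ g w' ε :=
    Finset.le_sup' (fun b : A => w' b + ε b) (Finset.mem_univ a)
  have h2 : w a - w' a ≤ ‖w - w'‖ := by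
    have := norm_le_pi_norm (w - w') a
    simp only [Pi.sub_apply, Real.norm_eq_abs] at this
    linarith [le_abs_self (w a - w' a)]
  linarith

lemma abs_g_sub_g (w w' ε : A → ℝ) : |g w ε - g w' ε| ≤ ‖w - w'‖ := by
  rw [abs_sub_le_iff]
  constructor
  · linarith [g_le w w' ε]
  · have := g_le w' w ε
    rw [norm_sub_rev] at this
    linarith

lemma g_eq_of_max {w ε : A → ℝ} {a : A}
    (h : ∀ b : A, b ≠ a → w b + ε b < w a + ε a) : g w ε = w a + ε a := by
  refine le_antisymm (Finset.sup'_le _ _ fun b _ => ?_)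
    (Finset.le_sup' (fun b : A => w b + ε b) (Finset.mem_univ a))
  by_cases hb : b = a
  · subst hb; exact le_refl _
  · exact (h b hb).le

end EMaux

open EMaux

/-- `φ(w) = ∫ max_{a∈A} (w a + ε a) dd(ε)` is a finite convex function on `ℝ^A`;
moreover, if for `d`-almost every `ε` the maximum of `w₀ a + ε a` over `a ∈ A` is attained at
a unique `a`, then `φ` is differentiable at `w₀` and its partial derivatives there are the
optimal choice probabilities `d({ε : w₀ a + ε a > w₀ b + ε b for all b ≠ a})`. -/
theorem expectedMax_convex_and_gradient {A : Type*} [Fintype A] [Nonempty A] [DecidableEq A]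
    (d : Measure (A → ℝ)) [IsProbabilityMeasure d]
    (hint : ∀ a : A, Integrable (fun ε : A → ℝ => ε a) d)
    (φ : (A → ℝ) → ℝ)
    (hφ : ∀ w : A → ℝ,
      φ w = ∫ ε, (Finset.univ.sup' Finset.univ_nonempty (fun a : A => w a + ε a)) ∂d) :
    ConvexOn ℝ Set.univ φ ∧
      ∀ w₀ : A → ℝ,
        (∀ᵐ ε ∂d, ∃! a : A, ∀ b : A, b ≠ a → w₀ b + ε b < w₀ a + ε a) →
          DifferentiableAt ℝ φ w₀ ∧
            ∀ a : A, fderiv ℝ φ w₀ (Pi.single a 1) =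
              (d {ε : A → ℝ | ∀ b : A, b ≠ a → w₀ b + ε b < w₀ a + ε a}).toReal := by
  have hφg : ∀ w : A → ℝ, φ w = ∫ ε, g w ε ∂d := hφ
  constructor
  · -- Convexity
    refine ⟨convex_univ, ?_⟩
    intro w _ w' _ t s ht hs hts
    rw [hφg, hφg, hφg, smul_eq_mul, smul_eq_mul]
    have hpt : ∀ ε : A → ℝ, g (t • w + s • w') ε ≤ t * g w ε + s * g w' ε := by
      intro ε
      apply Finset.sup'_le
      intro a _
      have h1 : w a + ε a ≤ g w ε :=
        Finset.le_sup' (fun b : A => w b + ε b) (Finset.mem_univ a)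
      have h2 : w' a + ε a ≤ g w' ε :=
        Finset.le_sup' (fun b : A => w' b + ε b) (Finset.mem_univ a)
      have : (t • w + s • w') a + ε a = t * (w a + ε a) + s * (w' a + ε a) := by
        simp only [Pi.add_apply, Pi.smul_apply, smul_eq_mul]
        linear_combination (-(ε a)) * hts
      rw [this]
      exact add_le_add (mul_le_mul_of_nonneg_left h1 ht) (mul_le_mul_of_nonneg_left h2 hs)
    calc ∫ ε, g (t • w + s • w') ε ∂d
        ≤ ∫ ε, (t * g w ε + s * g w' ε) ∂d :=
          integral_mono (g_integrable hint _)
            (((g_integrable hint w).const_mul t).add ((g_integrable hint w').const_mul s)) hpt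
      _ = t * ∫ ε, g w ε ∂d + s * ∫ ε, g w' ε ∂d := by
          rw [integral_add ((g_integrable hint w).const_mul t)
            ((g_integrable hint w').const_mul s), integral_const_mul, integral_const_mul]
  · -- Differentiability
    intro w₀ hae
    set S : A → Set (A → ℝ) :=
      fun a => {ε : A → ℝ | ∀ b : A, b ≠ a → w₀ b + ε b < w₀ a + ε a} with hS
    have hSmeas : ∀ a, MeasurableSet (S a) := by
      intro a
      have : S a = ⋂ b : A, {ε : A → ℝ | b ≠ a → w₀ b + ε b < w₀ a + ε a} := by
        ext ε; simp [hS, Set.mem_iInter]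
      rw [this]
      refine MeasurableSet.iInter fun b => ?_
      by_cases hb : b = a
      · simp [hb]
      · have : {ε : A → ℝ | b ≠ a → w₀ b + ε b < w₀ a + ε a}
            = {ε : A → ℝ | w₀ b + ε b < w₀ a + ε a} := by
          ext ε; simp [hb]
        rw [this]
        exact measurableSet_lt (by fun_prop)
          (by fun_prop)
    have hSdisj : ∀ (a b : A), a ≠ b → ∀ ε, ε ∈ S a → ε ∉ S b := by
      intro a b hab ε ha hb
      have h1 : w₀ b + ε b < w₀ a + ε a := ha b (Ne.symm hab)
      have h2 : w₀ a + ε a < w₀ b + ε b := hb a hab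
      linarith
    set p : A → ℝ := fun a => (d (S a)).toReal with hp
    set L : (A → ℝ) →L[ℝ] ℝ :=
      ∑ a : A, p a • (ContinuousLinearMap.proj a : (A → ℝ) →L[ℝ] ℝ) with hLdef
    have hL : ∀ h : A → ℝ, L h = ∑ a : A, p a * h a := by
      intro h
      simp [hLdef, ContinuousLinearMap.sum_apply, ContinuousLinearMap.proj_apply]
    set ψ : (A → ℝ) → (A → ℝ) → ℝ :=
      fun h ε => ∑ a : A, (S a).indicator (fun _ => h a) ε with hψdef
    have hψ_meas : ∀ h, Measurable (ψ h) := by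
      intro h
      exact Finset.measurable_sum _ fun a _ => measurable_const.indicator (hSmeas a)
    have hψ_int : ∀ h, Integrable (ψ h) d := by
      intro h
      exact integrable_finset_sum _ fun a _ => (integrable_const (h a)).indicator (hSmeas a)
    have hψ_eq : ∀ (h ε) (a : A), ε ∈ S a → ψ h ε = h a := by
      intro h ε a ha
      have hrfl : ψ h ε = ∑ b : A, (S b).indicator (fun _ => h b) ε := rfl
      rw [hrfl, Finset.sum_eq_single a]
      · simp [Set.indicator_of_mem ha]
      · intro b _ hb
        exact Set.indicator_of_notMem (hSdisj a b (Ne.symm hb) ε ha) _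
      · intro h'; exact absurd (Finset.mem_univ a) h'
    have hψ_bound : ∀ h ε, |ψ h ε| ≤ ‖h‖ := by
      intro h ε
      by_cases hc : ∃ a, ε ∈ S a
      · obtain ⟨a, ha⟩ := hc
        rw [hψ_eq h ε a ha]
        simpa [Real.norm_eq_abs] using norm_le_pi_norm h a
      · push_neg at hc
        have : ψ h ε = 0 := by
          rw [hψdef]
          exact Finset.sum_eq_zero fun a _ => Set.indicator_of_notMem (hc a) _
        rw [this]; simpa using norm_nonneg h
    have hψ_integral : ∀ h, ∫ ε, ψ h ε ∂d = L h := by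
      intro h
      rw [hL, hψdef]
      rw [integral_finset_sum _ fun a _ => (integrable_const (h a)).indicator (hSmeas a)]
      congr 1
      ext a
      rw [integral_indicator_const _ (hSmeas a)]
      simp [hp, smul_eq_mul, mul_comm, Measure.real]
    -- key identity
    have hkey : ∀ x' : A → ℝ, φ x' - φ w₀ - L (x' - w₀)
        = ∫ ε, (g x' ε - g w₀ ε - ψ (x' - w₀) ε) ∂d := by
      intro x'
      have h1 : Integrable (fun ε => g x' ε - g w₀ ε) d :=
        (g_integrable hint x').sub (g_integrable hint w₀)
      rw [hφg, hφg, ← hψ_integral (x' - w₀),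
        ← integral_sub (g_integrable hint x') (g_integrable hint w₀),
        ← integral_sub h1 (hψ_int _)]
    set G : (A → ℝ) → (A → ℝ) → ℝ :=
      fun x' ε => ‖x' - w₀‖⁻¹ * |g x' ε - g w₀ ε - ψ (x' - w₀) ε| with hGdef
    have hG_bound : ∀ x' ε, |G x' ε| ≤ 2 := by
      intro x' ε
      rcases eq_or_ne x' w₀ with h | h
      · subst h
        have : ψ (x' - x') ε = 0 := by
          simp [hψdef]
        simp [hGdef, this]
      · have hpos : 0 < ‖x' - w₀‖ := by
          rw [norm_pos_iff]; exact sub_ne_zero.mpr h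
        have h1 : |g x' ε - g w₀ ε - ψ (x' - w₀) ε| ≤ 2 * ‖x' - w₀‖ := by
          calc |g x' ε - g w₀ ε - ψ (x' - w₀) ε|
              ≤ |g x' ε - g w₀ ε| + |ψ (x' - w₀) ε| := abs_sub _ _
            _ ≤ ‖x' - w₀‖ + ‖x' - w₀‖ := add_le_add (abs_g_sub_g _ _ _) (hψ_bound _ _)
            _ = 2 * ‖x' - w₀‖ := by ring
        have : G x' ε ≤ 2 := by
          rw [hGdef]
          rw [inv_mul_le_iff₀ hpos]
          linarith
        have hnn : 0 ≤ G x' ε := by positivity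
        rw [abs_of_nonneg hnn]; exact this
    have hG_lim : ∀ᵐ ε ∂d, Tendsto (fun x' => G x' ε) (𝓝 w₀) (𝓝 0) := by
      filter_upwards [hae] with ε hε
      obtain ⟨a, ha, -⟩ := hε
      have hεS : ε ∈ S a := ha
      have hg0 : g w₀ ε = w₀ a + ε a := g_eq_of_max ha
      have hev : ∀ᶠ x' in 𝓝 w₀, ∀ b : A, b ≠ a → x' b + ε b < x' a + ε a := by
        rw [eventually_all]
        intro b
        by_cases hb : b = a
        · subst hb
          exact Filter.Eventually.of_forall fun x' hc => absurd rfl hc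
        · have hcont : Continuous fun x' : A → ℝ => (x' a + ε a) - (x' b + ε b) := by
            fun_prop
          have h0 : 0 < (w₀ a + ε a) - (w₀ b + ε b) := sub_pos.mpr (ha b hb)
          have := (hcont.tendsto w₀).eventually (eventually_gt_nhds h0)
          filter_upwards [this] with x' hx' _
          linarith
      have hev0 : ∀ᶠ x' in 𝓝 w₀, G x' ε = 0 := by
        filter_upwards [hev] with x' hx'
        have hg1 : g x' ε = x' a + ε a := g_eq_of_max hx'
        have hψa : ψ (x' - w₀) ε = x' a - w₀ a := by
          rw [hψ_eq _ ε a hεS]; simp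
        have hz : g x' ε - g w₀ ε - ψ (x' - w₀) ε = 0 := by
          rw [hg1, hg0, hψa]; ring
        simp [hGdef, hz]
      exact Tendsto.congr' (hev0.mono fun x' h => h.symm) tendsto_const_nhds
    have hDCT : Tendsto (fun x' => ∫ ε, G x' ε ∂d) (𝓝 w₀) (𝓝 0) := by
      have := tendsto_integral_filter_of_dominated_convergence (μ := d)
        (F := G) (f := fun _ => (0 : ℝ)) (bound := fun _ => (2 : ℝ))
        (Filter.Eventually.of_forall fun x' =>
          ((((g_meas x').sub (g_meas w₀)).sub (hψ_meas _)).abs.const_mul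
            _).aestronglyMeasurable)
        (Filter.Eventually.of_forall fun x' =>
          Filter.Eventually.of_forall fun ε => by
            simpa [Real.norm_eq_abs] using hG_bound x' ε)
        (integrable_const 2) hG_lim
      simpa using this
    have hfd : HasFDerivAt φ L w₀ := by
      rw [hasFDerivAt_iff_tendsto]
      apply squeeze_zero
        (fun x' => mul_nonneg (inv_nonneg.mpr (norm_nonneg _)) (norm_nonneg _)) _ hDCT
      intro x'
      rw [hkey x']
      calc ‖x' - w₀‖⁻¹ * ‖∫ ε, (g x' ε - g w₀ ε - ψ (x' - w₀) ε) ∂d‖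
          ≤ ‖x' - w₀‖⁻¹ * ∫ ε, |g x' ε - g w₀ ε - ψ (x' - w₀) ε| ∂d := by
            apply mul_le_mul_of_nonneg_left _ (inv_nonneg.mpr (norm_nonneg _))
            simpa [Real.norm_eq_abs] using
              norm_integral_le_integral_norm (fun ε => g x' ε - g w₀ ε - ψ (x' - w₀) ε)
        _ = ∫ ε, G x' ε ∂d := (integral_const_mul _ _).symm
    refine ⟨hfd.differentiableAt, ?_⟩
    intro a
    rw [hfd.fderiv, hL]
    rw [Finset.sum_eq_single a]
    · simp [hp, hS]
    · intro b _ hb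
      simp [Pi.single_eq_of_ne hb]
    · intro h'; exact absurd (Finset.mem_univ a) h'
end

section
/- Let d be the product over A of independent standard Gumbel distributions, i.e., the product probability measure on ℝ^A whose each factor is the measure on ℝ with density x ↦ exp(−(x + exp(−x))) with respect to Lebesgue measure. Then for every w : A → ℝ, ∫ max_{a∈A} (w a + ε a) dd(ε) = log( Σ_{a∈A} exp(w a) ) + γ_EM, where γ_EM is the Euler–Mascheroni constant. -/
open MeasureTheory

/-- The standard Gumbel distribution on `ℝ`: the measure with density
`x ↦ exp (−(x + exp (−x)))` with respect to Lebesgue measure. -/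
noncomputable def stdGumbel : Measure ℝ :=
  volume.withDensity fun x => ENNReal.ofReal (Real.exp (-(x + Real.exp (-x))))

instance : SigmaFinite stdGumbel := by
  refine Measure.sigmaFinite_of_le volume ?_
  have h : (fun x : ℝ => ENNReal.ofReal (Real.exp (-(x + Real.exp (-x))))) ≤ᵐ[volume] 1 := by
    refine Filter.Eventually.of_forall fun x => ?_
    have h1 : (0 : ℝ) ≤ x + Real.exp (-x) := by
      have := Real.add_one_le_exp (-x)
      linarith
    have h2 : Real.exp (-(x + Real.exp (-x))) ≤ 1 := by
      rw [Real.exp_le_one_iff]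
      linarith
    simpa using ENNReal.ofReal_le_one.mpr h2
  calc stdGumbel ≤ volume.withDensity 1 := withDensity_mono h
    _ = volume := withDensity_one


namespace GumbelAux
open Set Filter Real
open scoped NNReal ENNReal

noncomputable def gd (x : ℝ) : ℝ := Real.exp (-(x + Real.exp (-x)))

lemma gd_eq (x : ℝ) : gd x = Real.exp (-x) * Real.exp (-Real.exp (-x)) := by
  rw [gd, ← Real.exp_add]; ring_nf

lemma gd_nonneg (x : ℝ) : 0 ≤ gd x := (Real.exp_pos _).le

lemma continuous_gd : Continuous gd := by unfold gd; fun_prop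

lemma expneg_hasDerivWithinAt (s : Set ℝ) :
    ∀ x ∈ s, HasDerivWithinAt (fun x => Real.exp (-x)) (-Real.exp (-x)) s x := by
  intro x _
  have h : HasDerivAt (fun x => Real.exp (-x)) (Real.exp (-x) * (-1)) x :=
    (Real.hasDerivAt_exp (-x)).comp x ((hasDerivAt_id x).neg)
  simpa using h.hasDerivWithinAt

lemma expneg_injOn (s : Set ℝ) : InjOn (fun x => Real.exp (-x)) s := by
  intro a _ b _ h
  simpa using Real.exp_injective h

lemma sub_exp (s : Set ℝ) (hs : MeasurableSet s) (g : ℝ → ℝ) :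
    ∫ t in (fun x => Real.exp (-x)) '' s, g t
      = ∫ x in s, Real.exp (-x) * g (Real.exp (-x)) := by
  rw [integral_image_eq_integral_abs_deriv_smul hs (expneg_hasDerivWithinAt s)
    (expneg_injOn s) g]
  simp [abs_of_pos (Real.exp_pos _)]

lemma sub_exp_int (s : Set ℝ) (hs : MeasurableSet s) (g : ℝ → ℝ) :
    IntegrableOn g ((fun x => Real.exp (-x)) '' s) ↔
      IntegrableOn (fun x => Real.exp (-x) * g (Real.exp (-x))) s := by
  rw [integrableOn_image_iff_integrableOn_abs_deriv_smul hs (expneg_hasDerivWithinAt s)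
    (expneg_injOn s) g]
  simp only [abs_neg, abs_of_pos (Real.exp_pos _), smul_eq_mul]

lemma image_Iic (y : ℝ) : (fun x => Real.exp (-x)) '' Iic y = Ici (Real.exp (-y)) := by
  ext t
  simp only [mem_image, mem_Iic, mem_Ici]
  constructor
  · rintro ⟨x, hx, rfl⟩
    exact Real.exp_le_exp.2 (neg_le_neg hx)
  · intro h
    have ht : 0 < t := lt_of_lt_of_le (Real.exp_pos _) h
    refine ⟨-Real.log t, ?_, by simp [Real.exp_log ht]⟩
    have : -y ≤ Real.log t := (Real.le_log_iff_exp_le ht).2 h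
    linarith

lemma image_univ_expneg : (fun x => Real.exp (-x)) '' univ = Ioi 0 := by
  rw [Set.image_univ]
  ext t
  simp only [mem_range, mem_Ioi]
  constructor
  · rintro ⟨x, rfl⟩; exact Real.exp_pos _
  · intro ht; exact ⟨-Real.log t, by simp [Real.exp_log ht]⟩

lemma cdf_integral (y : ℝ) : ∫ x in Iic y, gd x = Real.exp (-Real.exp (-y)) := by
  have h := sub_exp (Iic y) measurableSet_Iic (fun t => Real.exp (-t))
  rw [image_Iic, integral_Ici_eq_integral_Ioi, integral_exp_neg_Ioi] at h
  calc ∫ x in Iic y, gd x = ∫ x in Iic y, Real.exp (-x) * Real.exp (-Real.exp (-x)) :=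
        setIntegral_congr_fun measurableSet_Iic fun x _ => gd_eq x
    _ = Real.exp (-Real.exp (-y)) := h.symm

lemma integrable_gd : Integrable gd := by
  have h := (sub_exp_int univ MeasurableSet.univ (fun t => Real.exp (-t))).1
  rw [image_univ_expneg] at h
  have h2 := h ((exp_neg_integrableOn_Ioi 0 one_pos).congr_fun
    (fun t _ => by norm_num) measurableSet_Ioi)
  rw [← integrableOn_univ]
  exact h2.congr_fun (fun x _ => (gd_eq x).symm) MeasurableSet.univ

lemma integral_gd : ∫ x, gd x = 1 := by
  have h := sub_exp univ MeasurableSet.univ (fun t => Real.exp (-t))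
  rw [image_univ_expneg] at h
  calc ∫ x, gd x = ∫ x in univ, Real.exp (-x) * Real.exp (-Real.exp (-x)) := by
        rw [setIntegral_univ]; exact integral_congr_ae (Eventually.of_forall gd_eq)
    _ = 1 := by rw [← h, integral_exp_neg_Ioi_zero]

lemma integral_log_mul_exp :
    ∫ t in Ioi (0:ℝ), Real.log t * Real.exp (-t) = -Real.eulerMascheroniConstant := by
  have h1 := Complex.hasDerivAt_GammaIntegral (s := 1) (by norm_num)
  have heq : (∫ t : ℝ in Ioi 0, (t:ℂ) ^ ((1:ℂ) - 1) * (Real.log t * Real.exp (-t)))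
      = ((∫ t in Ioi (0:ℝ), Real.log t * Real.exp (-t) : ℝ) : ℂ) := by
    rw [show (∫ t : ℝ in Ioi 0, (t:ℂ) ^ ((1:ℂ) - 1) * (Real.log t * Real.exp (-t)))
        = ∫ t : ℝ in Ioi 0, ((Real.log t * Real.exp (-t) : ℝ) : ℂ) from
      setIntegral_congr_fun measurableSet_Ioi fun t _ => by push_cast; simp]
    exact integral_ofReal
  rw [heq] at h1
  have h2 : Complex.Gamma =ᶠ[nhds (1:ℂ)] Complex.GammaIntegral := by
    filter_upwards [(Complex.continuous_re.isOpen_preimage (Ioi 0) isOpen_Ioi).mem_nhds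
      (by norm_num : (1:ℂ) ∈ Complex.re ⁻¹' Ioi 0)] with s hs
    exact Complex.Gamma_eq_integral hs
  have h3 : HasDerivAt Complex.Gamma
      ((∫ t in Ioi (0:ℝ), Real.log t * Real.exp (-t) : ℝ) : ℂ) 1 :=
    h1.congr_of_eventuallyEq h2
  have h4 := h3.unique Complex.hasDerivAt_Gamma_one
  exact_mod_cast h4

lemma integrableOn_log_mul_exp :
    IntegrableOn (fun t => Real.log t * Real.exp (-t)) (Ioi (0:ℝ)) := by
  have hmeas : AEStronglyMeasurable (fun t => Real.log t * Real.exp (-t))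
      (volume : Measure ℝ) :=
    (Real.measurable_log.mul (Real.measurable_exp.comp measurable_neg)).aestronglyMeasurable
  rw [← Ioc_union_Ioi_eq_Ioi (zero_le_one : (0:ℝ) ≤ 1)]
  refine IntegrableOn.union ?_ ?_
  · -- on Ioc 0 1, bound |log t| ≤ 2 * t ^ (-(1/2) : ℝ)
    have hbound : IntegrableOn (fun t : ℝ => 2 * t ^ (-(1/2) : ℝ)) (Ioc (0:ℝ) 1) := by
      have := intervalIntegral.intervalIntegrable_rpow' (a := 0) (b := 1)
        (r := (-(1/2) : ℝ)) (by norm_num)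
      rw [intervalIntegrable_iff_integrableOn_Ioc_of_le zero_le_one] at this
      exact this.const_mul 2
    refine Integrable.mono' hbound (hmeas.restrict) ?_
    filter_upwards [ae_restrict_mem measurableSet_Ioc] with t ht
    have ht0 : 0 < t := ht.1
    have h1 : |Real.log t * Real.exp (-t)| ≤ |Real.log t| := by
      rw [abs_mul]
      nlinarith [abs_nonneg (Real.log t), abs_of_pos (Real.exp_pos (-t)),
        Real.exp_le_one_iff.2 (neg_nonpos.2 ht0.le), abs_exp (-t)]
    have h2 : |Real.log t| = Real.log t⁻¹ := by
      rw [Real.log_inv, abs_of_nonpos (Real.log_nonpos ht0.le ht.2)]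
    have h3 : Real.log t⁻¹ ≤ (t⁻¹) ^ ((1:ℝ)/2) / ((1:ℝ)/2) :=
      Real.log_le_rpow_div (inv_nonneg.2 ht0.le) (by norm_num)
    have h4 : (t⁻¹) ^ ((1:ℝ)/2) / ((1:ℝ)/2) = 2 * t ^ (-(1/2) : ℝ) := by
      rw [Real.inv_rpow ht0.le, ← Real.rpow_neg ht0.le]
      ring
    calc ‖Real.log t * Real.exp (-t)‖ ≤ |Real.log t| := h1
      _ = Real.log t⁻¹ := h2
      _ ≤ 2 * t ^ (-(1/2) : ℝ) := by rw [← h4]; exact h3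
  · -- on Ioi 1, bound by exp (-t) * t ^ (2-1 : ℝ)
    have hbound : IntegrableOn (fun t : ℝ => Real.exp (-t) * t ^ ((2:ℝ)-1)) (Ioi (1:ℝ)) :=
      (Real.GammaIntegral_convergent (by norm_num : (0:ℝ) < 2)).mono_set
        (Ioi_subset_Ioi zero_le_one)
    refine Integrable.mono' hbound (hmeas.restrict) ?_
    filter_upwards [ae_restrict_mem measurableSet_Ioi] with t ht
    have ht1 : (1:ℝ) < t := ht
    have ht0 : (0:ℝ) < t := zero_lt_one.trans ht1
    have hlog : |Real.log t| ≤ t := by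
      rw [abs_of_nonneg (Real.log_nonneg ht1.le)]
      linarith [Real.log_le_sub_one_of_pos ht0]
    have : ‖Real.log t * Real.exp (-t)‖ ≤ t * Real.exp (-t) := by
      rw [norm_mul, Real.norm_eq_abs, Real.norm_eq_abs, abs_exp]
      exact mul_le_mul_of_nonneg_right hlog (Real.exp_pos _).le
    calc ‖Real.log t * Real.exp (-t)‖ ≤ t * Real.exp (-t) := this
      _ = Real.exp (-t) * t ^ ((2:ℝ)-1) := by
          rw [show ((2:ℝ)-1) = 1 by norm_num, Real.rpow_one]; ring

lemma isProbStdGumbel : IsProbabilityMeasure stdGumbel := by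
  constructor
  rw [stdGumbel, withDensity_apply _ MeasurableSet.univ, Measure.restrict_univ]
  show ∫⁻ x, ENNReal.ofReal (gd x) = 1
  rw [← ofReal_integral_eq_lintegral_ofReal integrable_gd (Eventually.of_forall gd_nonneg),
    integral_gd]
  simp

lemma stdGumbel_Iic (y : ℝ) :
    stdGumbel (Iic y) = ENNReal.ofReal (Real.exp (-Real.exp (-y))) := by
  rw [stdGumbel, withDensity_apply _ measurableSet_Iic]
  show ∫⁻ x in Iic y, ENNReal.ofReal (gd x) = _
  rw [← ofReal_integral_eq_lintegral_ofReal integrable_gd.integrableOn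
      (Eventually.of_forall fun x => gd_nonneg x), cdf_integral]

lemma integrable_id_mul_gd : Integrable (fun x => x * gd x) := by
  have h := (sub_exp_int univ MeasurableSet.univ
    (fun t => -Real.log t * Real.exp (-t))).1
  rw [image_univ_expneg] at h
  have hneg : IntegrableOn (fun t : ℝ => -Real.log t * Real.exp (-t)) (Ioi 0) :=
    integrableOn_log_mul_exp.neg.congr
      (Filter.Eventually.of_forall fun t => by simp only [Pi.neg_apply, neg_mul])
  have h2 := h hneg
  rw [← integrableOn_univ]
  refine h2.congr_fun (fun x _ => ?_) MeasurableSet.univ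
  beta_reduce
  rw [Real.log_exp, gd_eq]
  ring

lemma integral_id_mul_gd :
    ∫ x, x * gd x = Real.eulerMascheroniConstant := by
  have h := sub_exp univ MeasurableSet.univ (fun t => -Real.log t * Real.exp (-t))
  rw [image_univ_expneg] at h
  have h2 : (∫ t in Ioi (0:ℝ), -Real.log t * Real.exp (-t))
      = Real.eulerMascheroniConstant := by
    rw [show (fun t : ℝ => -Real.log t * Real.exp (-t))
        = fun t : ℝ => -(Real.log t * Real.exp (-t)) from funext fun t => by ring]
    rw [integral_neg, integral_log_mul_exp, neg_neg]
  rw [← setIntegral_univ, ← h2, h]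
  refine setIntegral_congr_fun MeasurableSet.univ fun x _ => ?_
  rw [Real.log_exp, gd_eq]
  ring

lemma integrable_id_stdGumbel : Integrable (fun x : ℝ => x) stdGumbel := by
  rw [stdGumbel, integrable_withDensity_iff
    (by fun_prop : Measurable fun x : ℝ => ENNReal.ofReal (Real.exp (-(x + Real.exp (-x)))))
    (Eventually.of_forall fun x => ENNReal.ofReal_lt_top)]
  refine integrable_id_mul_gd.congr (Eventually.of_forall fun x => ?_)
  show x * gd x = x * (ENNReal.ofReal (gd x)).toReal
  rw [ENNReal.toReal_ofReal (gd_nonneg x)]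

lemma integral_id_stdGumbel :
    ∫ x, x ∂stdGumbel = Real.eulerMascheroniConstant := by
  rw [stdGumbel]
  rw [show (fun x : ℝ => ENNReal.ofReal (Real.exp (-(x + Real.exp (-x)))))
      = fun x : ℝ => ((Real.toNNReal (gd x) : ℝ≥0) : ℝ≥0∞) from rfl]
  have hgm : Measurable fun x : ℝ => Real.toNNReal (gd x) := by
    exact measurable_real_toNNReal.comp continuous_gd.measurable
  rw [integral_withDensity_eq_integral_smul hgm]
  rw [← integral_id_mul_gd]
  refine integral_congr_ae (Eventually.of_forall fun x => ?_)
  show (Real.toNNReal (gd x)) • x = x * gd x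
  rw [NNReal.smul_def, Real.coe_toNNReal _ (gd_nonneg x), smul_eq_mul, mul_comm]

end GumbelAux

instance : IsProbabilityMeasure stdGumbel := GumbelAux.isProbStdGumbel

/-- for the product of independent standard Gumbel distributions,
`∫ max_{a∈A} (w a + ε a) dd(ε) = log (Σ_{a∈A} exp (w a)) + γ_EM`. -/
theorem gumbel_expected_max {A : Type*} [Fintype A] [Nonempty A] (w : A → ℝ) :
    ∫ ε : A → ℝ, (Finset.univ.sup' Finset.univ_nonempty (fun a : A => w a + ε a))
        ∂(Measure.pi fun _ : A => stdGumbel) =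
      Real.log (∑ a, Real.exp (w a)) + Real.eulerMascheroniConstant := by
  classical
  set c : ℝ := Real.log (∑ a, Real.exp (w a)) with hc
  have hsum : (0:ℝ) < ∑ a, Real.exp (w a) :=
    Finset.sum_pos (fun a _ => Real.exp_pos _) Finset.univ_nonempty
  have hec : Real.exp c = ∑ a, Real.exp (w a) := Real.exp_log hsum
  set m : (A → ℝ) → ℝ :=
    fun ε => Finset.univ.sup' Finset.univ_nonempty (fun a : A => w a + ε a) with hmdef
  have hm : Measurable m := by
    have h : Measurable (Finset.univ.sup' (Finset.univ_nonempty (α := A))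
        (fun a (ε : A → ℝ) => w a + ε a)) :=
      Finset.measurable_sup' _ fun a _ => measurable_const.add (measurable_pi_apply a)
    convert h using 1
    funext ε
    rw [Finset.sup'_apply]
  have hmap : (Measure.pi fun _ : A => stdGumbel).map m
      = stdGumbel.map (fun x => x + c) := by
    refine Measure.ext_of_Iic _ _ fun y => ?_
    rw [Measure.map_apply hm measurableSet_Iic,
      Measure.map_apply (measurable_add_const c) measurableSet_Iic]
    have hpre : m ⁻¹' Set.Iic y = Set.pi Set.univ fun a => Set.Iic (y - w a) := by
      ext ε
      simp only [Set.mem_preimage, Set.mem_Iic, Set.mem_pi, Set.mem_univ, true_implies,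
        hmdef, Finset.sup'_le_iff, Finset.mem_univ, forall_true_left]
      exact forall_congr' fun a => by constructor <;> intro h <;> linarith
    have hpre2 : (fun x : ℝ => x + c) ⁻¹' Set.Iic y = Set.Iic (y - c) := by
      ext x; simp [Set.mem_Iic, le_sub_iff_add_le]
    rw [hpre, hpre2, Measure.pi_pi, GumbelAux.stdGumbel_Iic]
    have hfa : ∀ a : A, stdGumbel (Set.Iic (y - w a))
        = ENNReal.ofReal (Real.exp (-Real.exp (w a - y))) := by
      intro a
      rw [GumbelAux.stdGumbel_Iic]
      congr 2
      rw [neg_sub]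
    simp_rw [hfa]
    rw [← ENNReal.ofReal_prod_of_nonneg (fun a _ => (Real.exp_pos _).le)]
    congr 1
    rw [← Real.exp_sum]
    congr 1
    have h1 : ∑ a, -Real.exp (w a - y) = -(Real.exp (-y) * ∑ a, Real.exp (w a)) := by
      rw [Finset.mul_sum, ← Finset.sum_neg_distrib]
      refine Finset.sum_congr rfl fun a _ => ?_
      rw [← Real.exp_add]
      congr 1
      ring
    rw [h1, ← hec, ← Real.exp_add]
    congr 2
    ring
  have key : ∫ ε : A → ℝ, m ε ∂(Measure.pi fun _ : A => stdGumbel)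
      = ∫ x, x ∂((Measure.pi fun _ : A => stdGumbel).map m) :=
    (integral_map hm.aemeasurable aestronglyMeasurable_id).symm
  rw [show (∫ ε : A → ℝ, (Finset.univ.sup' Finset.univ_nonempty (fun a : A => w a + ε a))
      ∂(Measure.pi fun _ : A => stdGumbel))
    = ∫ ε : A → ℝ, m ε ∂(Measure.pi fun _ : A => stdGumbel) from rfl]
  have key2 : ∫ x, x ∂(stdGumbel.map (fun x => x + c)) = ∫ x, x + c ∂stdGumbel :=
    integral_map (measurable_add_const c).aemeasurable aestronglyMeasurable_id
  rw [key, hmap, key2]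
  rw [integral_add GumbelAux.integrable_id_stdGumbel (integrable_const c),
    GumbelAux.integral_id_stdGumbel, integral_const, probReal_univ]
  simp only [ENNReal.toReal_one, one_smul]
  ring
end

section
/- Let d be the product over A of independent standard Gumbel distributions on ℝ^A. Then for every w : A → ℝ and every a ∈ A, the probability that action a is the unique argmax of the perturbed utilities is the softmax probability: d({ε : w a + ε a > w b + ε b for all b ≠ a}) = exp(w a) / Σ_{b∈A} exp(w b). -/
open MeasureTheory

open Real Filter Set

lemma gumbel_hasDerivAt {K : ℝ} (hK : K ≠ 0) (x : ℝ) :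
    HasDerivAt (fun t => (1/K) * Real.exp (-(K * Real.exp (-t))))
      (Real.exp (-(x + K * Real.exp (-x)))) x := by
  have h1 : HasDerivAt (fun t : ℝ => -(K * Real.exp (-t))) (K * Real.exp (-x)) x := by
    have := (Real.hasDerivAt_exp (-x)).comp x (hasDerivAt_neg x)
    simpa [Pi.neg_def] using (this.const_mul K).neg
  have h2 := (Real.hasDerivAt_exp _).comp x h1
  have h3 := h2.const_mul (1/K)
  refine h3.congr_deriv ?_
  field_simp
  rw [neg_add, Real.exp_add]

lemma gumbel_tendsto_atTop {K : ℝ} :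
    Tendsto (fun t => (1/K) * Real.exp (-(K * Real.exp (-t)))) atTop (nhds (1/K)) := by
  have h : Tendsto (fun t : ℝ => -(K * Real.exp (-t))) atTop (nhds 0) := by
    have := Real.tendsto_exp_atBot.comp (tendsto_neg_atBot_iff.mpr tendsto_id)
    simpa using ((this.const_mul K).neg)
  have := (Real.continuous_exp.tendsto 0).comp h
  simpa using this.const_mul (1/K)

lemma gumbel_tendsto_atBot {K : ℝ} (hK : 0 < K) :
    Tendsto (fun t => (1/K) * Real.exp (-(K * Real.exp (-t)))) atBot (nhds 0) := by
  have h : Tendsto (fun t : ℝ => -(K * Real.exp (-t))) atBot atBot := by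
    apply tendsto_neg_atTop_atBot.comp
    exact (Real.tendsto_exp_atTop.comp (tendsto_neg_atTop_iff.mpr tendsto_id)).const_mul_atTop hK
  have := Real.tendsto_exp_atBot.comp h
  simpa using this.const_mul (1/K)

lemma sq_le_four_mul_exp {y : ℝ} (hy : 0 ≤ y) : y ^ 2 ≤ 4 * Real.exp y := by
  have h0 : Real.exp y = Real.exp (y/2) * Real.exp (y/2) := by
    rw [← Real.exp_add]; ring_nf
  nlinarith [Real.add_one_le_exp (y/2), Real.exp_pos (y/2)]

lemma gumbel_integrable {K : ℝ} (hK : 0 < K) :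
    Integrable (fun x => Real.exp (-(x + K * Real.exp (-x)))) := by
  have hcont : Continuous (fun x => Real.exp (-(x + K * Real.exp (-x)))) := by continuity
  rw [← integrableOn_univ, ← Set.Iic_union_Ioi (a := (0:ℝ))]
  apply IntegrableOn.union
  · apply Integrable.mono' (((integrableOn_exp_Iic 0).const_mul (4/K^2)))
      hcont.aestronglyMeasurable.restrict
    filter_upwards [ae_restrict_mem measurableSet_Iic] with x _
    rw [Real.norm_eq_abs, abs_of_pos (Real.exp_pos _)]
    have hs : 0 < Real.exp (-x) := Real.exp_pos _
    have hex : 0 < Real.exp x := Real.exp_pos _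
    have hKe : 0 < Real.exp (K * Real.exp (-x)) := Real.exp_pos _
    have key : Real.exp (-x) * K^2 * Real.exp (-x) ≤ 4 * Real.exp (K * Real.exp (-x)) := by
      calc Real.exp (-x) * K^2 * Real.exp (-x) = (K * Real.exp (-x))^2 := by ring
        _ ≤ 4 * Real.exp (K * Real.exp (-x)) := sq_le_four_mul_exp (by positivity)
    have e1 : Real.exp (-x) * Real.exp x = 1 := by rw [← Real.exp_add]; simp
    rw [neg_add, Real.exp_add, Real.exp_neg (K * Real.exp (-x)), ← div_eq_mul_inv,
      div_le_iff₀ hKe, div_mul_eq_mul_div, div_mul_eq_mul_div,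
      le_div_iff₀ (by positivity : (0:ℝ) < K^2)]
    nlinarith [mul_le_mul_of_nonneg_right key hex.le, e1, hs, hex, hKe, sq_nonneg K]
  · apply Integrable.mono' (exp_neg_integrableOn_Ioi 0 one_pos)
      hcont.aestronglyMeasurable.restrict
    filter_upwards [ae_restrict_mem measurableSet_Ioi] with x _
    rw [Real.norm_eq_abs, abs_of_pos (Real.exp_pos _)]
    apply Real.exp_le_exp.mpr
    have : 0 ≤ K * Real.exp (-x) := by positivity
    linarith

lemma gumbel_integral {K : ℝ} (hK : 0 < K) :
    ∫ x, Real.exp (-(x + K * Real.exp (-x))) = 1/K := by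
  have := integral_of_hasDerivAt_of_tendsto (gumbel_hasDerivAt hK.ne')
    (gumbel_integrable hK) (gumbel_tendsto_atBot hK) gumbel_tendsto_atTop
  rw [this]; ring

lemma gumbel_lintegral {K : ℝ} (hK : 0 < K) :
    ∫⁻ x, ENNReal.ofReal (Real.exp (-(x + K * Real.exp (-x)))) = ENNReal.ofReal (1/K) := by
  rw [← ofReal_integral_eq_lintegral_ofReal (gumbel_integrable hK)
    (Filter.Eventually.of_forall fun x => (Real.exp_pos _).le), gumbel_integral hK]

lemma stdGumbel_Iio (y : ℝ) :
    stdGumbel (Set.Iio y) = ENNReal.ofReal (Real.exp (-Real.exp (-y))) := by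
  rw [stdGumbel, withDensity_apply _ measurableSet_Iio]
  have hint : IntegrableOn (fun x => Real.exp (-(x + Real.exp (-x)))) (Set.Iio y) := by
    have := (gumbel_integrable one_pos).integrableOn (s := Set.Iio y)
    simpa using this
  rw [← ofReal_integral_eq_lintegral_ofReal hint
    (Filter.Eventually.of_forall fun x => (Real.exp_pos _).le)]
  congr 1
  rw [← integral_Iic_eq_integral_Iio]
  have hder : ∀ x ∈ Set.Iio y, HasDerivAt (fun t => Real.exp (-Real.exp (-t)))
      (Real.exp (-(x + Real.exp (-x)))) x := by
    intro x _
    have := gumbel_hasDerivAt (K := 1) one_ne_zero x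
    simpa using this
  have htb : Tendsto (fun t => Real.exp (-Real.exp (-t))) atBot (nhds 0) := by
    have := gumbel_tendsto_atBot (K := 1) one_pos
    simpa using this
  have hcont : ContinuousWithinAt (fun t => Real.exp (-Real.exp (-t))) (Set.Iic y) y := by
    apply Continuous.continuousWithinAt; continuity
  have := integral_Iic_of_hasDerivAt_of_tendsto hcont hder
    (by simpa using (gumbel_integrable one_pos).integrableOn (s := Set.Iic y)) htb
  rw [this, sub_zero]

/-- for the product of independent standard Gumbel distributions, the
probability that action `a` is the unique argmax of the perturbed utilities `w b + ε b`
is the softmax probability `exp (w a) / Σ_b exp (w b)`. -/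
theorem gumbel_choice_probability {A : Type*} [Fintype A] [Nonempty A] (w : A → ℝ) (a : A) :
    (Measure.pi fun _ : A => stdGumbel)
        {ε : A → ℝ | ∀ b : A, b ≠ a → w b + ε b < w a + ε a} =
      ENNReal.ofReal (Real.exp (w a) / ∑ b, Real.exp (w b)) := by
  classical
  set p : A → Prop := fun b => b = a with hp
  haveI : Unique {b : A // p b} := ⟨⟨⟨a, rfl⟩⟩, fun b => Subtype.ext b.2⟩
  set ν : Measure ({b : A // ¬ p b} → ℝ) := Measure.pi fun _ => stdGumbel with hν
  set S' : ℝ := ∑ b : {b : A // ¬ p b}, Real.exp (w b - w a) with hS'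
  have hS'nonneg : 0 ≤ S' := Finset.sum_nonneg fun b _ => (Real.exp_pos _).le
  have hKpos : (0:ℝ) < 1 + S' := by linarith
  -- measure preserving reduction
  have h1 := measurePreserving_piEquivPiSubtypeProd (fun _ : A => stdGumbel) p
  have h2 := (measurePreserving_funUnique stdGumbel {b : A // p b}).prod
    (MeasurePreserving.id ν)
  have h3 : MeasurePreserving
      ((Prod.map (⇑(MeasurableEquiv.funUnique {b : A // p b} ℝ)) id) ∘
        ⇑(MeasurableEquiv.piEquivPiSubtypeProd (fun _ : A => ℝ) p))
      (Measure.pi fun _ : A => stdGumbel) (stdGumbel.prod ν) := by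
    refine h2.comp ?_
    convert h1 using 2
    exact congrArg (fun F : Fintype {b : A // p b} =>
      @Measure.pi {b : A // p b} (fun _ => ℝ) F (fun _ => inferInstance) fun _ => stdGumbel)
      (Subsingleton.elim _ _)
  have hfun : (Prod.map (⇑(MeasurableEquiv.funUnique {b : A // p b} ℝ)) id) ∘
      ⇑(MeasurableEquiv.piEquivPiSubtypeProd (fun _ : A => ℝ) p)
      = fun ε : A → ℝ => ((ε a, fun b : {b : A // ¬ p b} => ε b) : ℝ × ({b : A // ¬ p b} → ℝ)) := by
    funext ε
    simp [MeasurableEquiv.piEquivPiSubtypeProd, MeasurableEquiv.funUnique,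
      Equiv.funUnique, Equiv.piEquivPiSubtypeProd]
    exact congrArg ε (default : {b : A // p b}).prop
  rw [hfun] at h3
  set T : Set (ℝ × ({b : A // ¬ p b} → ℝ)) :=
    {q | ∀ b : {b : A // ¬ p b}, q.2 b < q.1 + (w a - w b)} with hT'
  have hT : MeasurableSet T := by
    have : T = ⋂ b : {b : A // ¬ p b}, {q : ℝ × ({b : A // ¬ p b} → ℝ) |
        q.2 b < q.1 + (w a - w b)} := by
      ext q; simp [hT', Set.mem_iInter]
    rw [this]
    exact MeasurableSet.iInter fun b => measurableSet_lt (by fun_prop) (by fun_prop)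
  have hST : {ε : A → ℝ | ∀ b : A, b ≠ a → w b + ε b < w a + ε a}
      = (fun ε : A → ℝ => ((ε a, fun b : {b : A // ¬ p b} => ε b)
          : ℝ × ({b : A // ¬ p b} → ℝ))) ⁻¹' T := by
    ext ε
    simp only [Set.mem_setOf_eq, Set.mem_preimage, hT']
    constructor
    · intro h b
      have := h b b.prop
      linarith
    · intro h b hb
      have := h ⟨b, hb⟩
      simp only at this
      linarith
  rw [hST, h3.measure_preimage hT.nullMeasurableSet]
  rw [Measure.prod_apply hT]
  have hinner : ∀ x : ℝ, ν (Prod.mk x ⁻¹' T)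
      = ENNReal.ofReal (Real.exp (-(Real.exp (-x) * S'))) := by
    intro x
    have hpre : Prod.mk x ⁻¹' T
        = Set.pi Set.univ (fun b : {b : A // ¬ p b} => Set.Iio (x + (w a - w b))) := by
      ext η; simp [hT', Set.mem_pi]
    rw [hpre, hν, Measure.pi_pi]
    simp_rw [stdGumbel_Iio]
    rw [← ENNReal.ofReal_prod_of_nonneg fun b _ => (Real.exp_pos _).le]
    congr 1
    rw [← Real.exp_sum]
    congr 1
    rw [hS', Finset.mul_sum, ← Finset.sum_neg_distrib]
    apply Finset.sum_congr rfl
    intro b _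
    rw [← Real.exp_add]
    congr 1
    ring
  simp_rw [hinner]
  have hmeas : Measurable fun x : ℝ => ENNReal.ofReal (Real.exp (-(Real.exp (-x) * S'))) := by
    fun_prop
  have hmeasd : Measurable fun x : ℝ => ENNReal.ofReal (Real.exp (-(x + Real.exp (-x)))) := by
    fun_prop
  rw [stdGumbel, lintegral_withDensity_eq_lintegral_mul _ hmeasd hmeas]
  have hpt : ∀ x : ℝ, ENNReal.ofReal (Real.exp (-(x + Real.exp (-x))))
      * ENNReal.ofReal (Real.exp (-(Real.exp (-x) * S')))
      = ENNReal.ofReal (Real.exp (-(x + (1 + S') * Real.exp (-x)))) := by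
    intro x
    rw [← ENNReal.ofReal_mul (Real.exp_pos _).le, ← Real.exp_add]
    congr 1
    ring
  calc ∫⁻ x, (fun x : ℝ => ENNReal.ofReal (Real.exp (-(x + Real.exp (-x))))) x
        * (fun x : ℝ => ENNReal.ofReal (Real.exp (-(Real.exp (-x) * S')))) x
      = ∫⁻ x, ENNReal.ofReal (Real.exp (-(x + (1 + S') * Real.exp (-x)))) := by
        simp_rw [hpt]
    _ = ENNReal.ofReal (1/(1 + S')) := gumbel_lintegral hKpos
    _ = ENNReal.ofReal (Real.exp (w a) / ∑ b, Real.exp (w b)) := by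
        congr 1
        have hsum : ∑ b, Real.exp (w b) = Real.exp (w a) * (1 + S') := by
          have hsplit := Finset.sum_filter_add_sum_filter_not Finset.univ p
            (fun b => Real.exp (w b))
          have e2 : ∑ b ∈ Finset.univ.filter p, Real.exp (w b) = Real.exp (w a) := by
            rw [hp]
            rw [show (Finset.filter (fun b => b = a) Finset.univ) = {a} by
              ext x; simp]
            exact Finset.sum_singleton _ _
          have e3 : ∑ b ∈ Finset.univ.filter (fun b => ¬ p b), Real.exp (w b)
              = ∑ b : {b : A // ¬ p b}, Real.exp (w b) :=
            Finset.sum_subtype _ (fun b => by simp) _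
          have e4 : Real.exp (w a) * S' = ∑ b : {b : A // ¬ p b}, Real.exp (w b) := by
            rw [hS', Finset.mul_sum]
            apply Finset.sum_congr rfl
            intro b _
            rw [← Real.exp_add]
            congr 1
            ring
          rw [← hsplit, e2, e3]
          linarith [e4]
        rw [hsum]
        rw [div_mul_eq_div_div]
        rw [div_self (Real.exp_pos _).ne']
end

section
/- For every η > 0, the soft (entropy-regularized) Bellman operator L defined by (L V)(s) = η · log( Σ_{a∈A} exp( ( r s a + γ Σ_{s'∈S} q s a s' · V(s') ) / η ) ) is a γ-contraction with respect to the supremum norm on functions S → ℝ, i.e., max_{s∈S} |(L V)(s) − (L V')(s)| ≤ γ · max_{s∈S} |V(s) − V'(s)| for all V, V' : S → ℝ; consequently there exists a unique V* : S → ℝ with L V* = V*. -/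
/-- log-sum-exp difference bound. -/
lemma lse_diff_le {A : Type*} [Fintype A] [Nonempty A] (f g : A → ℝ) :
    Real.log (∑ a, Real.exp (f a)) - Real.log (∑ a, Real.exp (g a)) ≤
      Finset.univ.sup' Finset.univ_nonempty (fun a => f a - g a) := by
  set M := Finset.univ.sup' Finset.univ_nonempty (fun a => f a - g a) with hM
  have hpos : (0 : ℝ) < ∑ a, Real.exp (g a) := by positivity
  have h1 : ∑ a, Real.exp (f a) ≤ Real.exp M * ∑ a, Real.exp (g a) := by
    rw [Finset.mul_sum]
    apply Finset.sum_le_sum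
    intro a _
    rw [← Real.exp_add]
    apply Real.exp_le_exp.2
    have : f a - g a ≤ M := Finset.le_sup' (fun a => f a - g a) (Finset.mem_univ a)
    linarith
  have h2 : Real.log (∑ a, Real.exp (f a)) ≤ Real.log (Real.exp M * ∑ a, Real.exp (g a)) :=
    Real.log_le_log (by positivity) h1
  rw [Real.log_mul (Real.exp_ne_zero M) (ne_of_gt hpos), Real.log_exp] at h2
  linarith

/-- for every `η > 0`, the soft (entropy-regularized) Bellman operator
`(L V)(s) = η · log (Σ_a exp ((r s a + γ Σ_{s'} q s a s' · V s') / η))` is a γ-contraction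
in the supremum norm; consequently it has a unique fixed point. -/
theorem soft_bellman_contraction {S A : Type*} [Fintype S] [Nonempty S] [Fintype A] [Nonempty A]
    (r : S → A → ℝ) (q : S → A → S → ℝ)
    (hq0 : ∀ s a s', 0 ≤ q s a s') (hq1 : ∀ s a, ∑ s', q s a s' = 1)
    (γ : ℝ) (hγ0 : 0 ≤ γ) (hγ1 : γ < 1)
    (η : ℝ) (hη : 0 < η)
    (L : (S → ℝ) → S → ℝ)
    (hL : ∀ (V : S → ℝ) (s : S), L V s =
      η * Real.log (∑ a, Real.exp ((r s a + γ * ∑ s', q s a s' * V s') / η))) :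
    (∀ V V' : S → ℝ,
        Finset.univ.sup' Finset.univ_nonempty (fun s : S => |L V s - L V' s|) ≤
          γ * Finset.univ.sup' Finset.univ_nonempty (fun s : S => |V s - V' s|)) ∧
      ∃! V : S → ℝ, L V = V := by
  -- pointwise bound
  have key : ∀ (V V' : S → ℝ) (M : ℝ), (∀ s, |V s - V' s| ≤ M) →
      ∀ s, |L V s - L V' s| ≤ γ * M := by
    intro V V' M hMle s
    set f : A → ℝ := fun a => (r s a + γ * ∑ s', q s a s' * V s') / η with hf
    set g : A → ℝ := fun a => (r s a + γ * ∑ s', q s a s' * V' s') / η with hg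
    have hdiff : ∀ a, |f a - g a| ≤ γ * M / η := by
      intro a
      have hsum : ∑ s', q s a s' * (V s' - V' s')
          = (∑ s', q s a s' * V s') - ∑ s', q s a s' * V' s' := by
        rw [← Finset.sum_sub_distrib]
        exact Finset.sum_congr rfl fun x _ => by ring
      have : f a - g a = γ * (∑ s', q s a s' * (V s' - V' s')) / η := by
        simp only [hf, hg]
        rw [div_sub_div_same, hsum]
        ring
      rw [this, abs_div, abs_of_pos hη, abs_mul, abs_of_nonneg hγ0]
      gcongr
      calc |∑ s', q s a s' * (V s' - V' s')| ≤ ∑ s', |q s a s' * (V s' - V' s')| :=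
            Finset.abs_sum_le_sum_abs _ _
        _ ≤ ∑ s', q s a s' * M := by
            apply Finset.sum_le_sum
            intro s' _
            rw [abs_mul, abs_of_nonneg (hq0 s a s')]
            exact mul_le_mul_of_nonneg_left (hMle s') (hq0 s a s')
        _ = M := by rw [← Finset.sum_mul, hq1, one_mul]
    have hbound : ∀ (u v : A → ℝ), (∀ a, u a - v a ≤ γ * M / η) →
        Real.log (∑ a, Real.exp (u a)) - Real.log (∑ a, Real.exp (v a)) ≤ γ * M / η := by
      intro u v h
      refine (lse_diff_le u v).trans ?_
      exact Finset.sup'_le _ _ fun a _ => h a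
    have h1 := hbound f g fun a => (abs_le.1 (hdiff a)).2
    have h2 := hbound g f fun a => by have := (abs_le.1 (hdiff a)).1; linarith
    have habs : |Real.log (∑ a, Real.exp (f a)) - Real.log (∑ a, Real.exp (g a))| ≤ γ * M / η :=
      abs_sub_le_iff.2 ⟨h1, h2⟩
    rw [hL V s, hL V' s, ← mul_sub, abs_mul, abs_of_pos hη]
    calc η * |Real.log (∑ a, Real.exp (f a)) - Real.log (∑ a, Real.exp (g a))|
        ≤ η * (γ * M / η) := mul_le_mul_of_nonneg_left habs hη.le
      _ = γ * M := by field_simp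
  have part1 : ∀ V V' : S → ℝ,
      Finset.univ.sup' Finset.univ_nonempty (fun s : S => |L V s - L V' s|) ≤
        γ * Finset.univ.sup' Finset.univ_nonempty (fun s : S => |V s - V' s|) := by
    intro V V'
    apply Finset.sup'_le
    intro s _
    exact key V V' _ (fun s' => Finset.le_sup' (fun s => |V s - V' s|) (Finset.mem_univ s')) s
  refine ⟨part1, ?_⟩
  -- Banach fixed point
  have hlip : LipschitzWith ⟨γ, hγ0⟩ L := by
    apply LipschitzWith.of_dist_le_mul
    intro V V'
    rw [dist_pi_le_iff (by positivity)]
    intro s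
    rw [Real.dist_eq]
    calc |L V s - L V' s| ≤ γ * dist V V' := by
          apply key
          intro s'
          rw [← Real.dist_eq]
          exact dist_le_pi_dist V V' s'
      _ = (⟨γ, hγ0⟩ : NNReal) * dist V V' := rfl
  have hC : ContractingWith ⟨γ, hγ0⟩ L := ⟨by exact_mod_cast hγ1, hlip⟩
  refine ⟨hC.fixedPoint L, hC.fixedPoint_isFixedPt, ?_⟩
  intro V hV
  exact hC.fixedPoint_unique hV
end

section
/- Suppose φ(w) = sup_{d∈Ξ} ∫ max_{a∈A} (w a + ε a) dd(ε) is finite for every w ∈ ℝ^A. Then φ is a convex function on ℝ^A; its convex conjugate φ*(π) = sup_{v∈ℝ^A} ( ⟨v, π⟩ − φ(v) ) satisfies φ*(π) = +∞ for every π ∉ Δ_A; and for every w ∈ ℝ^A, φ(w) = sup_{π∈Δ_A} ( ⟨w, π⟩ − φ*(π) ). Hence every distributionally robust expected-maximum function is the regularized Bellman update associated with the concave regularizer −φ* restricted to the simplex. -/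
open MeasureTheory

section AuxDS

variable {A : Type*} [Fintype A] [Nonempty A]

private lemma aux_integrable_sup' (d : Measure (A → ℝ)) [IsProbabilityMeasure d]
    (hint : ∀ a : A, Integrable (fun ε : A → ℝ => ε a) d) (w : A → ℝ) :
    Integrable (fun ε : A → ℝ =>
      Finset.univ.sup' Finset.univ_nonempty (fun a : A => w a + ε a)) d := by
  have key : ∀ (s : Finset A) (hs : s.Nonempty),
      Integrable (fun ε : A → ℝ => s.sup' hs (fun a : A => w a + ε a)) d := by
    intro s hs
    induction hs using Finset.Nonempty.cons_induction with
    | singleton a => simpa using (integrable_const (w a)).add (hint a)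
    | cons a s ha hs ih =>
        simp only [Finset.sup'_cons hs]
        exact ((integrable_const (w a)).add (hint a)).sup ih
  exact key _ _

private lemma aux_sup'_add_const (f : A → ℝ) (t : ℝ) :
    Finset.univ.sup' Finset.univ_nonempty (fun a : A => f a + t)
      = Finset.univ.sup' Finset.univ_nonempty f + t := by
  apply le_antisymm
  · exact Finset.sup'_le _ _ fun a _ =>
      add_le_add_left (Finset.le_sup' f (Finset.mem_univ a)) t
  · have h2 : ∀ a ∈ Finset.univ, f a ≤
        Finset.univ.sup' Finset.univ_nonempty (fun a : A => f a + t) - t := fun a _ => by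
      have := Finset.le_sup' (fun a : A => f a + t) (Finset.mem_univ a)
      linarith
    linarith [Finset.sup'_le Finset.univ_nonempty f h2]

private lemma aux_csSup_add {S : Set ℝ} (hS : S.Nonempty) (hb : BddAbove S) (t : ℝ) :
    sSup ((fun x => x + t) '' S) = sSup S + t := by
  apply le_antisymm
  · refine csSup_le (hS.image _) ?_
    rintro x ⟨y, hy, rfl⟩
    exact add_le_add_left (le_csSup hb hy) t
  · obtain ⟨b, hbb⟩ := hb
    have hbdd : BddAbove ((fun x => x + t) '' S) := ⟨b + t, by
      rintro x ⟨y, hy, rfl⟩; exact add_le_add_left (hbb hy) t⟩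
    have : sSup S ≤ sSup ((fun x => x + t) '' S) - t := by
      refine csSup_le hS fun y hy => ?_
      have := le_csSup hbdd (Set.mem_image_of_mem _ hy)
      linarith
    linarith

/-- `Fi w d = ∫ max_a (w a + ε a) dd`. -/
private noncomputable def Fi (w : A → ℝ) (d : Measure (A → ℝ)) : ℝ :=
  ∫ ε, (Finset.univ.sup' Finset.univ_nonempty (fun a : A => w a + ε a)) ∂d

private lemma Fi_mono (d : Measure (A → ℝ)) [IsProbabilityMeasure d]
    (hint : ∀ a : A, Integrable (fun ε : A → ℝ => ε a) d) {v w : A → ℝ}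
    (hvw : ∀ a, v a ≤ w a) : Fi v d ≤ Fi w d := by
  refine integral_mono (aux_integrable_sup' d hint v) (aux_integrable_sup' d hint w) fun ε => ?_
  exact Finset.sup'_le _ _ fun a _ =>
    le_trans (add_le_add_left (hvw a) _)
      (Finset.le_sup' (fun a : A => w a + ε a) (Finset.mem_univ a))

private lemma Fi_shift (d : Measure (A → ℝ)) [IsProbabilityMeasure d]
    (hint : ∀ a : A, Integrable (fun ε : A → ℝ => ε a) d) (w : A → ℝ) (t : ℝ) :
    Fi (fun a => w a + t) d = Fi w d + t := by
  have h1 : ∀ ε : A → ℝ,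
      Finset.univ.sup' Finset.univ_nonempty (fun a : A => (w a + t) + ε a)
        = Finset.univ.sup' Finset.univ_nonempty (fun a : A => w a + ε a) + t := by
    intro ε
    rw [← aux_sup'_add_const (fun a : A => w a + ε a) t]
    exact Finset.sup'_congr _ rfl fun a _ => by ring
  unfold Fi
  simp only [h1]
  rw [integral_add (aux_integrable_sup' d hint w) (integrable_const t), integral_const]
  simp

private lemma Fi_combo (d : Measure (A → ℝ)) [IsProbabilityMeasure d]
    (hint : ∀ a : A, Integrable (fun ε : A → ℝ => ε a) d)
    (x y : A → ℝ) {p q : ℝ} (hp : 0 ≤ p) (hq : 0 ≤ q) (hpq : p + q = 1) :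
    Fi (fun a => p * x a + q * y a) d ≤ p * Fi x d + q * Fi y d := by
  have hx := aux_integrable_sup' d hint x
  have hy := aux_integrable_sup' d hint y
  have hmono : ∀ ε : A → ℝ,
      Finset.univ.sup' Finset.univ_nonempty (fun a : A => (p * x a + q * y a) + ε a)
        ≤ p * Finset.univ.sup' Finset.univ_nonempty (fun a : A => x a + ε a)
          + q * Finset.univ.sup' Finset.univ_nonempty (fun a : A => y a + ε a) := by
    intro ε
    refine Finset.sup'_le _ _ fun a _ => ?_
    have h1 : x a + ε a ≤ Finset.univ.sup' Finset.univ_nonempty (fun a : A => x a + ε a) :=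
      Finset.le_sup' (fun a : A => x a + ε a) (Finset.mem_univ a)
    have h2 : y a + ε a ≤ Finset.univ.sup' Finset.univ_nonempty (fun a : A => y a + ε a) :=
      Finset.le_sup' (fun a : A => y a + ε a) (Finset.mem_univ a)
    have key : (p * x a + q * y a) + ε a = p * (x a + ε a) + q * (y a + ε a) := by
      linear_combination (-(ε a)) * hpq
    rw [key]
    exact add_le_add (mul_le_mul_of_nonneg_left h1 hp) (mul_le_mul_of_nonneg_left h2 hq)
  calc Fi (fun a => p * x a + q * y a) d
      ≤ ∫ ε, (p * Finset.univ.sup' Finset.univ_nonempty (fun a : A => x a + ε a)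
          + q * Finset.univ.sup' Finset.univ_nonempty (fun a : A => y a + ε a)) ∂d :=
        integral_mono (aux_integrable_sup' d hint _)
          ((hx.const_mul p).add (hy.const_mul q)) hmono
    _ = p * Fi x d + q * Fi y d := by
        rw [integral_add (hx.const_mul p) (hy.const_mul q), integral_const_mul, integral_const_mul]; rfl

private lemma Fi_lb (d : Measure (A → ℝ)) [IsProbabilityMeasure d]
    (hint : ∀ a : A, Integrable (fun ε : A → ℝ => ε a) d) (π v : A → ℝ)
    (hπ0 : ∀ a, 0 ≤ π a) (hπ1 : ∑ a, π a = 1) :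
    ∑ a, v a * π a + ∑ a, π a * (∫ ε, ε a ∂d) ≤ Fi v d := by
  have hI2 : ∀ a ∈ Finset.univ, Integrable (fun ε : A → ℝ => π a * (v a + ε a)) d := by
    intro a _
    simpa using (((integrable_const (v a)).add (hint a)).const_mul (π a))
  have hI : Integrable (fun ε : A → ℝ => ∑ a, π a * (v a + ε a)) d :=
    integrable_finset_sum _ hI2
  have hpt : ∀ ε : A → ℝ, ∑ a, π a * (v a + ε a)
      ≤ Finset.univ.sup' Finset.univ_nonempty (fun a : A => v a + ε a) := by
    intro ε
    calc ∑ a, π a * (v a + ε a)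
        ≤ ∑ a, π a * Finset.univ.sup' Finset.univ_nonempty (fun a : A => v a + ε a) :=
          Finset.sum_le_sum fun a _ =>
            mul_le_mul_of_nonneg_left
            (Finset.le_sup' (fun a : A => v a + ε a) (Finset.mem_univ a)) (hπ0 a)
      _ = _ := by rw [← Finset.sum_mul, hπ1, one_mul]
  have hmain := integral_mono hI (aux_integrable_sup' d hint v) hpt
  rw [integral_finset_sum _ hI2] at hmain
  have heq : ∀ a : A,
      ∫ ε : A → ℝ, π a * (v a + ε a) ∂d = v a * π a + π a * ∫ ε : A → ℝ, ε a ∂d := by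
    intro a
    rw [integral_const_mul, integral_add (integrable_const _) (hint a), integral_const]
    simp [measure_univ]
    ring
  rw [Finset.sum_congr rfl fun a _ => heq a, Finset.sum_add_distrib] at hmain
  exact hmain

end AuxDS

/-- if `φ(w) = sup_{d∈Ξ} ∫ max_{a∈A} (w a + ε a) dd(ε)` is finite for every
`w ∈ ℝ^A`, then `φ` is convex on `ℝ^A`; its convex conjugate
`φ*(π) = sup_v (⟨v, π⟩ − φ(v))` is `+∞` off the probability simplex (the supremum is
unbounded above for `π ∉ Δ_A`); and `φ(w) = sup_{π∈Δ_A} (⟨w, π⟩ − φ*(π))` for every `w`.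
Thus every distributionally robust expected-maximum function is the regularized Bellman
update associated with the concave regularizer `−φ*` restricted to the simplex. -/
theorem dsExpectedMax_convex_conjugate {A : Type*} [Fintype A] [Nonempty A]
    (Ξ : Set (Measure (A → ℝ))) (hne : Ξ.Nonempty)
    (hprob : ∀ d ∈ Ξ, IsProbabilityMeasure d)
    (hint : ∀ d ∈ Ξ, ∀ a : A, Integrable (fun ε : A → ℝ => ε a) d)
    (φ : (A → ℝ) → ℝ)
    (hφ : ∀ w : A → ℝ, φ w = sSup ((fun d : Measure (A → ℝ) =>
      ∫ ε, (Finset.univ.sup' Finset.univ_nonempty (fun a : A => w a + ε a)) ∂d) '' Ξ))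
    (hfin : ∀ w : A → ℝ, BddAbove ((fun d : Measure (A → ℝ) =>
      ∫ ε, (Finset.univ.sup' Finset.univ_nonempty (fun a : A => w a + ε a)) ∂d) '' Ξ))
    (φStar : (A → ℝ) → ℝ)
    (hφStar : ∀ π : A → ℝ, φStar π = sSup (Set.range fun v : A → ℝ => ∑ a, v a * π a - φ v)) :
    ConvexOn ℝ Set.univ φ ∧
      (∀ π : A → ℝ, π ∉ {π : A → ℝ | (∀ a, 0 ≤ π a) ∧ ∑ a, π a = 1} →
        ¬ BddAbove (Set.range fun v : A → ℝ => ∑ a, v a * π a - φ v)) ∧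
      ∀ w : A → ℝ, φ w = sSup {x : ℝ | ∃ π : A → ℝ,
        ((∀ a, 0 ≤ π a) ∧ ∑ a, π a = 1) ∧ x = ∑ a, w a * π a - φStar π} := by
  classical
  have hφ' : ∀ w : A → ℝ, φ w = sSup (Fi w '' Ξ) := hφ
  have hfin' : ∀ w : A → ℝ, BddAbove (Fi w '' Ξ) := hfin
  -- basic sup facts
  have hle : ∀ (w : A → ℝ), ∀ d ∈ Ξ, Fi w d ≤ φ w := by
    intro w d hd
    rw [hφ' w]
    exact le_csSup (hfin' w) ⟨d, hd, rfl⟩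
  have hφle : ∀ (w : A → ℝ) (c : ℝ), (∀ d ∈ Ξ, Fi w d ≤ c) → φ w ≤ c := by
    intro w c h
    rw [hφ' w]
    refine csSup_le (hne.image _) ?_
    rintro x ⟨d, hd, rfl⟩
    exact h d hd
  -- monotonicity
  have hmono : ∀ v w : A → ℝ, (∀ a, v a ≤ w a) → φ v ≤ φ w := by
    intro v w hvw
    refine hφle v (φ w) fun d hd => ?_
    haveI := hprob d hd
    exact le_trans (Fi_mono d (hint d hd) hvw) (hle w d hd)
  -- translation identity
  have hshift : ∀ (w : A → ℝ) (t : ℝ), φ (fun a => w a + t) = φ w + t := by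
    intro w t
    have himg : Fi (fun a => w a + t) '' Ξ = (fun x => x + t) '' (Fi w '' Ξ) := by
      rw [Set.image_image]
      refine Set.image_congr fun d hd => ?_
      haveI := hprob d hd
      exact Fi_shift d (hint d hd) w t
    rw [hφ' (fun a => w a + t), himg, aux_csSup_add (hne.image _) (hfin' w) t, ← hφ' w]
  -- convexity
  have hconv : ConvexOn ℝ Set.univ φ := by
    refine ⟨convex_univ, fun x _ y _ p q hp hq hpq => ?_⟩
    have hsm : (p • x + q • y) = fun a => p * x a + q * y a := by
      funext a; simp [smul_eq_mul]
    simp only [smul_eq_mul, hsm]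
    refine hφle _ _ fun d hd => ?_
    haveI := hprob d hd
    calc Fi (fun a => p * x a + q * y a) d ≤ p * Fi x d + q * Fi y d :=
          Fi_combo d (hint d hd) x y hp hq hpq
      _ ≤ p * φ x + q * φ y :=
          add_le_add (mul_le_mul_of_nonneg_left (hle x d hd) hp)
            (mul_le_mul_of_nonneg_left (hle y d hd) hq)
  have hconst : ∀ t : ℝ, φ (fun _ : A => t) = φ 0 + t := by
    intro t
    have := hshift 0 t
    simpa using this
  refine ⟨hconv, ?_, ?_⟩
  · -- part 2 : unboundedness off the simplex
    rintro π hπ ⟨b, hb⟩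
    have hbmem : ∀ v : A → ℝ, ∑ a, v a * π a - φ v ≤ b := fun v => hb ⟨v, rfl⟩
    by_cases hpos : ∀ a, 0 ≤ π a
    · -- then the sum must differ from 1
      have hsum : ∑ a, π a ≠ 1 := fun h1 => hπ ⟨hpos, h1⟩
      set s : ℝ := ∑ a, π a - 1 with hs
      have hs0 : s ≠ 0 := sub_ne_zero.mpr hsum
      set t : ℝ := (b + φ 0 + 1) / s with ht
      have hts : t * s = b + φ 0 + 1 := div_mul_cancel₀ _ hs0
      have hval := hbmem (fun _ : A => t)
      rw [hconst t] at hval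
      have hsumv : ∑ a, t * π a = t * ∑ a, π a := by rw [Finset.mul_sum]
      rw [hsumv] at hval
      have : t * ∑ a, π a = t * s + t := by rw [hs]; ring
      linarith
    · push_neg at hpos
      obtain ⟨a₀, ha₀⟩ := hpos
      have hneg : π a₀ < 0 := ha₀
      set t : ℝ := max 0 ((b + φ 0 + 1) / (-π a₀)) with ht
      have ht0 : 0 ≤ t := le_max_left _ _
      set v : A → ℝ := fun a => if a = a₀ then -t else 0 with hv
      have hφv : φ v ≤ φ (fun _ : A => (0:ℝ)) := by
        refine hmono v _ fun a => ?_
        by_cases h : a = a₀ <;> simp [hv, h] <;> linarith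
      have hφ0 : φ (fun _ : A => (0:ℝ)) = φ 0 := by norm_num [hconst 0]
      have hsumv : ∑ a, v a * π a = -t * π a₀ := by
        rw [Finset.sum_eq_single_of_mem a₀ (Finset.mem_univ a₀)]
        · simp [hv]
        · intro a _ hne'
          simp [hv, hne']
      have hval := hbmem v
      rw [hsumv] at hval
      have hdiv : (b + φ 0 + 1) / (-π a₀) ≤ t := le_max_right _ _
      have hmul : b + φ 0 + 1 ≤ t * (-π a₀) := by
        rw [← div_le_iff₀ (by linarith : (0:ℝ) < -π a₀)] at *
        exact hdiv
      have hre : -t * π a₀ = t * (-π a₀) := by ring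
      linarith
  · -- part 3 : biconjugate representation
    intro w
    -- continuity of φ
    have hcont : Continuous φ := by
      have := hconv.continuousOn isOpen_univ
      exact continuousOn_univ.mp this
    -- strict epigraph is open and convex
    set S : Set ((A → ℝ) × ℝ) := {p : (A → ℝ) × ℝ | φ p.1 < p.2} with hSdef
    have hSopen : IsOpen S := isOpen_lt (hcont.comp continuous_fst) continuous_snd
    have hSconv : Convex ℝ S := by
      rintro ⟨x1, x2⟩ hx ⟨y1, y2⟩ hy p q hp hq hpq
      simp only [hSdef, Set.mem_setOf_eq] at hx hy ⊢
      have h := hconv.2 (Set.mem_univ x1) (Set.mem_univ y1) hp hq hpq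
      simp only [smul_eq_mul, Prod.smul_mk, Prod.mk_add_mk] at h ⊢
      have hlt : p * φ x1 + q * φ y1 < p * x2 + q * y2 := by
        rcases eq_or_lt_of_le hp with h0 | h0
        · have hq1 : q = 1 := by linarith
          rw [← h0, hq1]; simpa using hy
        · exact add_lt_add_of_lt_of_le (mul_lt_mul_of_pos_left hx h0)
            (mul_le_mul_of_nonneg_left hy.le hq)
      exact lt_of_le_of_lt h hlt
    have hwnot : (w, φ w) ∉ S := by simp [hSdef]
    obtain ⟨f, hf⟩ := geometric_hahn_banach_open_point hSconv hSopen hwnot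
    set g : (A → ℝ) → ℝ := fun v => f (v, 0) with hg
    set c : ℝ := f (0, 1) with hcdef
    have hsplit : ∀ (v : A → ℝ) (t : ℝ), f (v, t) = g v + t * c := by
      intro v t
      have hdecomp : (v, t) = ((v, (0:ℝ)) + t • ((0 : A → ℝ), (1:ℝ))) := by
        simp [Prod.ext_iff]
      rw [hdecomp, map_add, _root_.map_smul]
      simp [hg, hcdef, smul_eq_mul]
    have hc : c < 0 := by
      have h1 := hf (w, φ w + 1) (by simp [hSdef])
      rw [hsplit, hsplit] at h1
      linarith
    have hcne : c ≠ 0 := ne_of_lt hc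
    -- the subgradient inequality in raw form
    have hsub0 : ∀ v : A → ℝ, g v + φ v * c ≤ g w + φ w * c := by
      intro v
      by_contra hcon
      push_neg at hcon
      set X : ℝ := g v + φ v * c with hX
      set K : ℝ := g w + φ w * c with hK
      set δ : ℝ := (X - K) / (2 * (-c)) with hδ
      have hδpos : 0 < δ := div_pos (by linarith) (by linarith)
      have hmem : (v, φ v + δ) ∈ S := by simp [hSdef]; linarith
      have := hf _ hmem
      rw [hsplit, hsplit] at this
      have hδc : δ * c = -((X - K) / 2) := by
        rw [hδ, div_mul_eq_mul_div, div_eq_iff (by intro h; apply hcne; linarith)]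
        ring
      have hexp : g v + (φ v + δ) * c = X + δ * c := by rw [hX]; ring
      rw [hexp, hδc] at this
      have h2 : (X - K) / 2 > 0 := by linarith
      linarith
    -- build π
    set π : A → ℝ := fun a => g (Pi.single a 1) / (-c) with hπdef
    have hgsum : ∀ v : A → ℝ, g v = ∑ a, v a * g (Pi.single a 1) := by
      intro v
      have hv : (v, (0:ℝ)) = ∑ a, v a • ((Pi.single a 1 : A → ℝ), (0:ℝ)) := by
        have h1 : ∀ a : A, v a • ((Pi.single a 1 : A → ℝ), (0:ℝ))
            = ((Pi.single a (v a) : A → ℝ), (0:ℝ)) := by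
          intro a
          rw [Prod.smul_mk, smul_zero]
          congr 1
          ext b
          by_cases h : b = a <;> simp [Pi.single_apply, h]
        rw [Finset.sum_congr rfl fun a _ => h1 a, Prod.ext_iff]
        constructor
        · rw [Prod.fst_sum]
          simp only
          exact (Finset.univ_sum_single v).symm
        · rw [Prod.snd_sum]
          simp
      calc g v = f (v, 0) := rfl
        _ = ∑ a, v a * g (Pi.single a 1) := by
            rw [hv, map_sum]
            refine Finset.sum_congr rfl fun a _ => ?_
            rw [_root_.map_smul]
            simp [hg, smul_eq_mul]
    have hsum_pi : ∀ v : A → ℝ, ∑ a, v a * π a = g v / (-c) := by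
      intro v
      rw [hgsum v, Finset.sum_div]
      refine Finset.sum_congr rfl fun a _ => ?_
      rw [hπdef]
      ring
    have hsub : ∀ v : A → ℝ, ∑ a, v a * π a - φ v ≤ ∑ a, w a * π a - φ w := by
      intro v
      have h := hsub0 v
      rw [hsum_pi, hsum_pi]
      have hcpos : (0:ℝ) < -c := by linarith
      have e : ∀ x y : ℝ, x / (-c) - y = (x + y * c) / (-c) := by
        intro x y
        field_simp
        ring
      rw [e, e]
      exact div_le_div_of_nonneg_right h hcpos.le
    -- π is in the simplex
    have hπsum : ∑ a, π a = 1 := by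
      have hgen : ∀ t : ℝ, t * (∑ a, π a) - t ≤ 0 := by
        intro t
        have h := hsub (fun a => w a + t)
        rw [hshift w t] at h
        have hexp : ∑ a, (w a + t) * π a = ∑ a, w a * π a + t * ∑ a, π a := by
          calc ∑ a, (w a + t) * π a = ∑ a, (w a * π a + t * π a) :=
                Finset.sum_congr rfl fun a _ => by ring
            _ = ∑ a, w a * π a + ∑ a, t * π a := Finset.sum_add_distrib
            _ = ∑ a, w a * π a + t * ∑ a, π a := by rw [Finset.mul_sum]
        rw [hexp] at h
        linarith
      have h1 := hgen 1
      have h2 := hgen (-1)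
      have := hgen 1
      nlinarith [h1, h2]
    have hπ0 : ∀ a, 0 ≤ π a := by
      intro a₀
      set v : A → ℝ := fun a => if a = a₀ then w a - 1 else w a with hv
      have hvw : ∀ a, v a ≤ w a := fun a => by
        by_cases h : a = a₀ <;> simp [hv, h]
      have hφv : φ v ≤ φ w := hmono v w hvw
      have h := hsub v
      have hsumdiff : ∑ a, v a * π a = ∑ a, w a * π a - π a₀ := by
        have hterm : ∀ a ∈ Finset.univ, v a * π a
            = w a * π a - (if a = a₀ then π a else 0) := by
          intro a _
          by_cases hh : a = a₀ <;> simp [hv, hh] <;> ring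
        rw [Finset.sum_congr rfl hterm, Finset.sum_sub_distrib,
          Finset.sum_ite_eq' Finset.univ a₀ π]
        simp
      rw [hsumdiff] at h
      linarith
    -- value of the conjugate at π
    have hbddr : BddAbove (Set.range fun v : A → ℝ => ∑ a, v a * π a - φ v) :=
      ⟨∑ a, w a * π a - φ w, by rintro x ⟨v, rfl⟩; exact hsub v⟩
    have hstar : φStar π = ∑ a, w a * π a - φ w := by
      rw [hφStar]
      apply le_antisymm
      · refine csSup_le (Set.range_nonempty _) ?_
        rintro x ⟨v, rfl⟩
        exact hsub v
      · exact le_csSup hbddr ⟨w, rfl⟩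
    -- membership of φ w in the target set
    set T : Set ℝ := {x : ℝ | ∃ π : A → ℝ,
        ((∀ a, 0 ≤ π a) ∧ ∑ a, π a = 1) ∧ x = ∑ a, w a * π a - φStar π} with hT
    have hmemT : φ w ∈ T := ⟨π, ⟨hπ0, hπsum⟩, by rw [hstar]; ring⟩
    have hub : ∀ x ∈ T, x ≤ φ w := by
      rintro x ⟨π', ⟨h0, h1⟩, rfl⟩
      obtain ⟨d, hd⟩ := hne
      haveI := hprob d hd
      have hbdd' : BddAbove (Set.range fun v : A → ℝ => ∑ a, v a * π' a - φ v) := by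
        refine ⟨- ∑ a, π' a * ∫ ε, ε a ∂d, ?_⟩
        rintro y ⟨v, rfl⟩
        have hlow := Fi_lb d (hint d hd) π' v h0 h1
        have h2 := hle v d hd
        simp only
        linarith
      have hge : ∑ a, w a * π' a - φ w ≤ φStar π' := by
        rw [hφStar]
        exact le_csSup hbdd' ⟨w, rfl⟩
      linarith
    apply le_antisymm
    · exact le_csSup ⟨φ w, hub⟩ hmemT
    · exact csSup_le ⟨φ w, hmemT⟩ hub
end

section
/- For every continuous concave function φ : Δ_A → ℝ there exists a nonempty collection Ξ of Borel probability measures on ℝ^A, each with integrable coordinates, such that for every w ∈ ℝ^A: sup_{π∈Δ_A} ( ⟨w, π⟩ + φ(π) ) = sup_{d∈Ξ} ∫ max_{a∈A} (w a + ε a) dd(ε). That is, every regularized Bellman update can be realized as a distributionally robust expected maximum. -/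
open MeasureTheory

section RegDROAux

set_option linter.unusedSectionVars false
set_option linter.unusedVariables false

variable {A : Type*} [Fintype A] [Nonempty A]

open Classical in
/-- indicator (vertex) distribution -/
noncomputable def RegDRO.ind (a : A) : A → ℝ := fun b => if b = a then 1 else 0

open Classical in
/-- support points of our discrete measures -/
noncomputable def RegDRO.vec (c M : ℝ) (a : A) : A → ℝ := fun b => c + if b = a then 0 else -M

/-- the discrete measure with mass `π a` at `x a` -/
noncomputable def RegDRO.dmeas (x : A → (A → ℝ)) (π : A → ℝ) : Measure (A → ℝ) :=
  ∑ a, ENNReal.ofReal (π a) • Measure.dirac (x a)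

namespace RegDRO

lemma sum_mul_ind (w : A → ℝ) (a : A) : ∑ b, w b * ind a b = w a := by
  classical
  simp [ind, mul_ite]

lemma ind_nonneg (a b : A) : 0 ≤ ind a b := by
  classical
  unfold ind; split <;> norm_num

lemma ind_sum (a : A) : ∑ b, ind (A := A) a b = 1 := by
  classical
  simp [ind]

lemma dmeas_integrable (x : A → (A → ℝ)) (π : A → ℝ) {f : (A → ℝ) → ℝ}
    (hf : Measurable f) : Integrable f (dmeas x π) := by
  rw [dmeas, integrable_finset_sum_measure]
  intro a _
  refine Integrable.smul_measure ?_ ENNReal.ofReal_ne_top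
  exact (integrable_const (f (x a))).congr (ae_eq_dirac f).symm

lemma dmeas_integral (x : A → (A → ℝ)) (π : A → ℝ) (hπ : ∀ a, 0 ≤ π a)
    {f : (A → ℝ) → ℝ} (hf : Measurable f) :
    ∫ ε, f ε ∂(dmeas x π) = ∑ a, π a * f (x a) := by
  rw [dmeas, integral_finset_sum_measure (fun a _ =>
    Integrable.smul_measure ((integrable_const (f (x a))).congr (ae_eq_dirac f).symm)
      ENNReal.ofReal_ne_top)]
  refine Finset.sum_congr rfl fun a _ => ?_
  rw [integral_smul_measure, integral_dirac, smul_eq_mul, ENNReal.toReal_ofReal (hπ a)]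

lemma dmeas_prob (x : A → (A → ℝ)) (π : A → ℝ) (hπ : ∀ a, 0 ≤ π a)
    (h1 : ∑ a, π a = 1) : IsProbabilityMeasure (dmeas x π) := by
  constructor
  rw [dmeas, Measure.finset_sum_apply]
  simp only [Measure.smul_apply, MeasurableSet.univ, Measure.dirac_apply' _ MeasurableSet.univ]
  simp only [Set.indicator_univ, Pi.one_apply, smul_eq_mul, mul_one]
  rw [← ENNReal.ofReal_sum_of_nonneg (fun a _ => hπ a), h1, ENNReal.ofReal_one]

lemma meas_supfun (w : A → ℝ) : Measurable fun ε : A → ℝ =>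
    Finset.univ.sup' Finset.univ_nonempty fun a : A => w a + ε a := by
  have h : (fun ε : A → ℝ => Finset.univ.sup' Finset.univ_nonempty fun a : A => w a + ε a)
      = Finset.univ.sup' Finset.univ_nonempty (fun (a : A) (ε : A → ℝ) => w a + ε a) := by
    funext ε
    rw [Finset.sup'_apply]
  rw [h]
  exact Finset.measurable_sup' _ fun a _ => measurable_const.add (measurable_pi_apply a)

lemma exists_M (π : A → ℝ) (hpos : ∀ a, 0 < π a) (g : A → ℝ) (c : ℝ) :
    ∃ M : ℝ, 0 ≤ M ∧ ∀ a a', c - g a' ≤ M * π a := by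
  classical
  set D : ℝ := Finset.univ.sup' Finset.univ_nonempty (fun a' => c - g a') with hD
  set p : ℝ := Finset.univ.inf' Finset.univ_nonempty π with hp
  have hp0 : 0 < p := by
    obtain ⟨a, -, ha⟩ := Finset.exists_mem_eq_inf' (Finset.univ_nonempty (α := A)) π
    rw [hp, ha]; exact hpos a
  refine ⟨max 0 (D / p), le_max_left _ _, fun a a' => ?_⟩
  have hDa : c - g a' ≤ D := by
    exact Finset.le_sup' (fun a' => c - g a') (Finset.mem_univ a')
  have hpa : p ≤ π a := Finset.inf'_le _ (Finset.mem_univ a)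
  rcases le_or_gt D 0 with hD0 | hD0
  · have : 0 ≤ max 0 (D / p) * π a :=
      mul_nonneg (le_max_left _ _) (hpos a).le
    linarith
  · have h1 : D / p ≤ max 0 (D / p) := le_max_right _ _
    have h2 : (D / p) * p ≤ max 0 (D / p) * π a := by
      apply mul_le_mul h1 hpa hp0.le (le_max_left _ _)
    rw [div_mul_cancel₀ _ hp0.ne'] at h2
    linarith

lemma lemB (w π : A → ℝ) (hπ0 : ∀ a, 0 ≤ π a) (hπ1 : ∑ a, π a = 1) (M cst : ℝ) :
    ∑ a, w a * π a + cst ≤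
      ∑ a, π a * (Finset.univ.sup' Finset.univ_nonempty fun b => w b + vec cst M a b) := by
  classical
  have key : ∀ a : A, π a * (w a + cst) ≤
      π a * (Finset.univ.sup' Finset.univ_nonempty fun b => w b + vec cst M a b) := by
    intro a
    refine mul_le_mul_of_nonneg_left ?_ (hπ0 a)
    have := Finset.le_sup' (fun b => w b + vec cst M a b) (Finset.mem_univ a)
    simpa only [vec, ↓reduceIte, add_zero] using this
  have hid : ∑ a, π a * (w a + cst) = (∑ a, w a * π a) + (∑ a, π a) * cst := by
    rw [Finset.sum_mul, ← Finset.sum_add_distrib]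
    exact Finset.sum_congr rfl fun a _ => by ring
  calc ∑ a, w a * π a + cst = ∑ a, π a * (w a + cst) := by rw [hid, hπ1, one_mul]
      _ ≤ _ := Finset.sum_le_sum fun a _ => key a

lemma lemA (w π : A → ℝ) (hπ0 : ∀ a, 0 ≤ π a) (hπ1 : ∑ a, π a = 1)
    (M : ℝ) (hM : 0 ≤ M) (astar : A) (hstar : ∀ b, w b ≤ w astar)
    (cst cb : ℝ) (hcond : ∀ a, cst - cb ≤ M * π a) :
    ∑ a, π a * (Finset.univ.sup' Finset.univ_nonempty fun b => w b + vec cst M a b)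
      ≤ max (∑ a, w a * π a + cst) (w astar + cb) := by
  classical
  set m : A → ℝ := fun a =>
    Finset.univ.sup' Finset.univ_nonempty fun b => w b + vec cst M a b with hm
  have h1 : ∀ a, m a ≤ max (w a + cst) (w astar - M + cst) := by
    intro a
    refine Finset.sup'_le _ _ fun b _ => ?_
    by_cases hb : b = a
    · subst hb
      refine le_trans ?_ (le_max_left _ _)
      simp [vec]
    · refine le_trans ?_ (le_max_right _ _)
      simp only [vec, if_neg hb]
      have := hstar b
      linarith
  by_cases hc : ∀ a, w astar - M ≤ w a
  · refine le_trans ?_ (le_max_left _ _)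
    have h2 : ∀ a, m a ≤ w a + cst := fun a =>
      (h1 a).trans (max_le le_rfl (by linarith [hc a]))
    have hid : ∑ a, π a * (w a + cst) = (∑ a, w a * π a) + (∑ a, π a) * cst := by
      rw [Finset.sum_mul, ← Finset.sum_add_distrib]
      exact Finset.sum_congr rfl fun a _ => by ring
    calc ∑ a, π a * m a ≤ ∑ a, π a * (w a + cst) :=
            Finset.sum_le_sum fun a _ => mul_le_mul_of_nonneg_left (h2 a) (hπ0 a)
      _ = ∑ a, w a * π a + cst := by rw [hid, hπ1, one_mul]
  · push_neg at hc
    obtain ⟨a₀, ha₀⟩ := hc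
    have key : ∀ a : A, π a * m a + (if a = a₀ then π a * M else 0)
        ≤ π a * (w astar + cst) := by
      intro a
      by_cases h : a = a₀
      · have hma : m a ≤ w astar - M + cst :=
          (h1 a).trans (max_le (by rw [h]; linarith) le_rfl)
        rw [if_pos h]
        have hre : π a * m a + π a * M = π a * (m a + M) := by ring
        rw [hre]
        exact mul_le_mul_of_nonneg_left (by linarith) (hπ0 a)
      · simp only [if_neg h, add_zero]
        have hma : m a ≤ w astar + cst :=
          (h1 a).trans (max_le (by linarith [hstar a]) (by linarith))
        exact mul_le_mul_of_nonneg_left hma (hπ0 a)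
    have hsum := Finset.sum_le_sum fun a (_ : a ∈ Finset.univ) => key a
    rw [Finset.sum_add_distrib, Finset.sum_ite_eq' Finset.univ a₀ (fun a => π a * M)] at hsum
    simp only [Finset.mem_univ, if_pos] at hsum
    have hR : ∑ a, π a * (w astar + cst) = w astar + cst := by
      rw [← Finset.sum_mul, hπ1, one_mul]
    rw [hR] at hsum
    have hc0 := hcond a₀
    refine le_trans ?_ (le_max_right _ _)
    nlinarith [hπ0 a₀]

end RegDRO

end RegDROAux

open RegDRO in
theorem regularized_update_as_dro {A : Type*} [Fintype A] [Nonempty A]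
    (Δ : Set (A → ℝ)) (hΔ : Δ = {π : A → ℝ | (∀ a, 0 ≤ π a) ∧ ∑ a, π a = 1})
    (φ : (A → ℝ) → ℝ) (hcont : ContinuousOn φ Δ) (hconc : ConcaveOn ℝ Δ φ) :
    ∃ Ξ : Set (Measure (A → ℝ)), Ξ.Nonempty ∧
      (∀ d ∈ Ξ, IsProbabilityMeasure d ∧ ∀ a : A, Integrable (fun ε : A → ℝ => ε a) d) ∧
      ∀ w : A → ℝ,
        sSup {x : ℝ | ∃ π ∈ Δ, x = ∑ a, w a * π a + φ π} =
          sSup {x : ℝ | ∃ d ∈ Ξ, x =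
            ∫ ε, (Finset.univ.sup' Finset.univ_nonempty (fun a : A => w a + ε a)) ∂d} := by
  classical
  subst hΔ
  set Δ' : Set (A → ℝ) := {π : A → ℝ | (∀ a, 0 ≤ π a) ∧ ∑ a, π a = 1} with hΔ'
  -- uniform distribution
  set u : A → ℝ := fun _ : A => (Fintype.card A : ℝ)⁻¹ with hu
  have hcard : (0:ℝ) < Fintype.card A := by
    exact_mod_cast Fintype.card_pos
  have hu0 : ∀ a, 0 < u a := fun a => by rw [hu]; exact inv_pos.2 hcard
  have hu1 : ∑ a, u a = 1 := by
    rw [hu]; simp [Finset.sum_const, Finset.card_univ]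
  have huΔ : u ∈ Δ' := ⟨fun a => (hu0 a).le, hu1⟩
  have hindΔ : ∀ a : A, ind a ∈ Δ' := fun a => ⟨ind_nonneg a, ind_sum a⟩
  -- bound for φ on Δ'
  have hclosed : IsClosed Δ' := by
    have h1 : IsClosed {π : A → ℝ | ∀ a, 0 ≤ π a} := by
      rw [Set.setOf_forall]
      exact isClosed_iInter fun a => isClosed_le continuous_const (continuous_apply a)
    have h2 : IsClosed {π : A → ℝ | ∑ a, π a = 1} :=
      isClosed_eq (continuous_finset_sum _ fun a _ => continuous_apply a) continuous_const
    rw [hΔ', Set.setOf_and]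
    exact h1.inter h2
  have hle1 : ∀ π ∈ Δ', ∀ a, π a ≤ 1 := by
    intro π hπ a
    rw [← hπ.2]
    exact Finset.single_le_sum (fun i _ => hπ.1 i) (Finset.mem_univ a)
  have hcomp : IsCompact Δ' := by
    refine (isCompact_univ_pi fun _ : A => isCompact_Icc (a := (0:ℝ)) (b := 1)).of_isClosed_subset
      hclosed ?_
    intro π hπ
    exact fun a _ => ⟨hπ.1 a, hle1 π hπ a⟩
  obtain ⟨C, hC⟩ := hcomp.exists_bound_of_continuousOn hcont
  have hφle : ∀ π ∈ Δ', φ π ≤ C := fun π h =>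
    (le_abs_self _).trans (by rw [← Real.norm_eq_abs]; exact hC π h)
  -- the ambiguity set
  refine ⟨{d | ∃ π M, (∀ a, 0 ≤ π a) ∧ (∑ a, π a = 1) ∧ 0 ≤ M ∧
      (∀ a a', φ π - φ (ind a') ≤ M * π a) ∧
      d = dmeas (vec (φ π) M) π}, ?_, ?_, ?_⟩
  · obtain ⟨M, hM0, hM⟩ := exists_M u hu0 (fun a' => φ (ind a')) (φ u)
    exact ⟨_, u, M, fun a => (hu0 a).le, hu1, hM0, fun a a' => hM a a', rfl⟩
  · rintro d ⟨π, M, h0, h1, -, -, rfl⟩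
    exact ⟨dmeas_prob _ _ h0 h1, fun a => dmeas_integrable _ _ (measurable_pi_apply a)⟩
  · intro w
    have hfmeas := meas_supfun w
    set S : Set ℝ := {x : ℝ | ∃ π ∈ Δ', x = ∑ a, w a * π a + φ π} with hS
    have hSne : S.Nonempty := ⟨_, u, huΔ, rfl⟩
    have hSbdd : BddAbove S := by
      refine ⟨(∑ a, |w a|) + C, ?_⟩
      rintro x ⟨π, hπ, rfl⟩
      have hsum : ∑ a, w a * π a ≤ ∑ a, |w a| := by
        refine Finset.sum_le_sum fun a _ => ?_
        calc w a * π a ≤ |w a| * π a := mul_le_mul_of_nonneg_right (le_abs_self _) (hπ.1 a)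
          _ ≤ |w a| * 1 := mul_le_mul_of_nonneg_left (hle1 π hπ a) (abs_nonneg _)
          _ = |w a| := mul_one _
      have := hφle π hπ
      linarith
    have helem : ∀ π ∈ Δ', ∑ a, w a * π a + φ π ≤ sSup S := fun π hπ =>
      le_csSup hSbdd ⟨π, hπ, rfl⟩
    -- every member value is ≤ sSup S
    have Key1 : ∀ x ∈ {x : ℝ | ∃ d ∈ {d | ∃ π M, (∀ a, 0 ≤ π a) ∧ (∑ a, π a = 1) ∧ 0 ≤ M ∧
        (∀ a a', φ π - φ (ind a') ≤ M * π a) ∧ d = dmeas (vec (φ π) M) π}, x =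
        ∫ ε, (Finset.univ.sup' Finset.univ_nonempty (fun a : A => w a + ε a)) ∂d},
        x ≤ sSup S := by
      rintro x ⟨d, ⟨π, M, h0, h1, hM0, hcond, rfl⟩, rfl⟩
      rw [dmeas_integral _ _ h0 hfmeas]
      obtain ⟨astar, -, hstar⟩ := Finset.exists_max_image Finset.univ w Finset.univ_nonempty
      have hA := lemA w π h0 h1 M hM0 astar (fun b => hstar b (Finset.mem_univ b))
        (φ π) (φ (ind astar)) (fun a => hcond a astar)
      refine hA.trans (max_le (helem π ⟨h0, h1⟩) ?_)
      have := helem (ind astar) (hindΔ astar)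
      rwa [sum_mul_ind] at this
    have hTne : {x : ℝ | ∃ d ∈ {d | ∃ π M, (∀ a, 0 ≤ π a) ∧ (∑ a, π a = 1) ∧ 0 ≤ M ∧
        (∀ a a', φ π - φ (ind a') ≤ M * π a) ∧ d = dmeas (vec (φ π) M) π}, x =
        ∫ ε, (Finset.univ.sup' Finset.univ_nonempty (fun a : A => w a + ε a)) ∂d}.Nonempty := by
      obtain ⟨M, hM0, hM⟩ := exists_M u hu0 (fun a' => φ (ind a')) (φ u)
      exact ⟨_, dmeas (vec (φ u) M) u,
        ⟨u, M, fun a => (hu0 a).le, hu1, hM0, fun a a' => hM a a', rfl⟩, rfl⟩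
    have hTbdd : BddAbove {x : ℝ | ∃ d ∈ {d | ∃ π M, (∀ a, 0 ≤ π a) ∧ (∑ a, π a = 1) ∧ 0 ≤ M ∧
        (∀ a a', φ π - φ (ind a') ≤ M * π a) ∧ d = dmeas (vec (φ π) M) π}, x =
        ∫ ε, (Finset.univ.sup' Finset.univ_nonempty (fun a : A => w a + ε a)) ∂d} :=
      ⟨sSup S, Key1⟩
    refine le_antisymm ?_ (csSup_le hTne Key1)
    refine csSup_le hSne ?_
    rintro x ⟨π, hπ, rfl⟩
    -- approximate π by interior points
    set πt : ℝ → A → ℝ := fun t a => (1 - t) * π a + t * u a with hπt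
    have claim : ∀ t ∈ Set.Ioc (0:ℝ) 1,
        (∑ a, w a * πt t a) + φ (πt t) ≤
        sSup {x : ℝ | ∃ d ∈ {d | ∃ π M, (∀ a, 0 ≤ π a) ∧ (∑ a, π a = 1) ∧ 0 ≤ M ∧
          (∀ a a', φ π - φ (ind a') ≤ M * π a) ∧ d = dmeas (vec (φ π) M) π}, x =
          ∫ ε, (Finset.univ.sup' Finset.univ_nonempty (fun a : A => w a + ε a)) ∂d} := by
      intro t ht
      have hpos : ∀ a, 0 < πt t a := by
        intro a
        have h1 : 0 ≤ (1 - t) * π a := mul_nonneg (by linarith [ht.2]) (hπ.1 a)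
        have h2 : 0 < t * u a := mul_pos ht.1 (hu0 a)
        simp only [hπt]; linarith
      have hsum1 : ∑ a, πt t a = 1 := by
        simp only [hπt]
        rw [Finset.sum_add_distrib, ← Finset.mul_sum, ← Finset.mul_sum, hπ.2, hu1]
        ring
      obtain ⟨M, hM0, hM⟩ := exists_M (πt t) hpos (fun a' => φ (ind a')) (φ (πt t))
      have hmem : dmeas (vec (φ (πt t)) M) (πt t) ∈ {d | ∃ π M, (∀ a, 0 ≤ π a) ∧
          (∑ a, π a = 1) ∧ 0 ≤ M ∧ (∀ a a', φ π - φ (ind a') ≤ M * π a) ∧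
          d = dmeas (vec (φ π) M) π} :=
        ⟨πt t, M, fun a => (hpos a).le, hsum1, hM0, fun a a' => hM a a', rfl⟩
      calc (∑ a, w a * πt t a) + φ (πt t)
          ≤ ∑ a, πt t a * (Finset.univ.sup' Finset.univ_nonempty fun b =>
              w b + vec (φ (πt t)) M a b) :=
            lemB w (πt t) (fun a => (hpos a).le) hsum1 M (φ (πt t))
        _ = ∫ ε, (Finset.univ.sup' Finset.univ_nonempty (fun a : A => w a + ε a))
              ∂(dmeas (vec (φ (πt t)) M) (πt t)) :=
            (dmeas_integral _ _ (fun a => (hpos a).le) hfmeas).symm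
        _ ≤ _ := le_csSup hTbdd ⟨_, hmem, rfl⟩
    -- take the limit t → 0⁺
    have hπtcont : Continuous fun t : ℝ => πt t :=
      continuous_pi fun a => ((continuous_const.sub continuous_id).mul continuous_const).add
        (continuous_id.mul continuous_const)
    have hπt0 : πt 0 = π := by
      funext a; simp [hπt]
    have hIoc : Set.Ioc (0:ℝ) 1 ∈ nhdsWithin (0:ℝ) (Set.Ioi 0) :=
      Ioc_mem_nhdsGT_of_mem ⟨le_rfl, zero_lt_one⟩
    have h1 : Filter.Tendsto πt (nhdsWithin (0:ℝ) (Set.Ioi 0)) (nhds π) := by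
      have := hπtcont.tendsto 0
      rw [hπt0] at this
      exact this.mono_left nhdsWithin_le_nhds
    have h2 : ∀ᶠ t in nhdsWithin (0:ℝ) (Set.Ioi 0), πt t ∈ Δ' := by
      filter_upwards [hIoc] with t ht
      have hpos : ∀ a, 0 ≤ πt t a := by
        intro a
        have h1 : 0 ≤ (1 - t) * π a := mul_nonneg (by linarith [ht.2]) (hπ.1 a)
        have h2 : 0 ≤ t * u a := mul_nonneg ht.1.le (hu0 a).le
        simp only [hπt]; linarith
      have hsum1 : ∑ a, πt t a = 1 := by
        simp only [hπt]
        rw [Finset.sum_add_distrib, ← Finset.mul_sum, ← Finset.mul_sum, hπ.2, hu1]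
        ring
      exact ⟨hpos, hsum1⟩
    have hφt : Filter.Tendsto (fun t => φ (πt t)) (nhdsWithin (0:ℝ) (Set.Ioi 0))
        (nhds (φ π)) :=
      Filter.Tendsto.comp (hcont π hπ) (tendsto_nhdsWithin_iff.2 ⟨h1, h2⟩)
    have hlin : Filter.Tendsto (fun t => ∑ a, w a * πt t a) (nhdsWithin (0:ℝ) (Set.Ioi 0))
        (nhds (∑ a, w a * π a)) := by
      have hc : Continuous fun t : ℝ => ∑ a, w a * πt t a :=
        continuous_finset_sum _ fun a _ => continuous_const.mul
          (((continuous_const.sub continuous_id).mul continuous_const).add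
            (continuous_id.mul continuous_const))
      have := hc.tendsto 0
      rw [show (∑ a, w a * πt 0 a) = ∑ a, w a * π a by rw [hπt0]] at this
      exact this.mono_left nhdsWithin_le_nhds
    refine le_of_tendsto (hlin.add hφt) ?_
    filter_upwards [hIoc] with t ht using claim t ht
end

section
/- Let A be a finite set with |A| ≥ 3. There exists a continuous strictly concave function φ : Δ_A → ℝ such that no single Borel probability measure d on ℝ^A with integrable coordinates satisfies, for every w ∈ ℝ^A and every a ∈ A: the unique maximizer π_w of ⟨w, π⟩ + φ(π) over Δ_A equals the vector of choice probabilities of d, i.e., π_w(a) = d({ε : w a + ε a > w b + ε b for all b ≠ a}). Hence the regularized MDP framework strictly subsumes the stochastic MDP framework when there are at least three actions. -/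
open MeasureTheory

/-- Expansion of the sum of squares of a combination. -/
lemma aux_sum_sq_comb {A : Type*} [Fintype A] (θ σ : ℝ) (u v : A → ℝ) :
    ∑ z, (θ * u z + σ * v z) * (θ * u z + σ * v z)
      = θ * θ * ∑ z, u z * u z + 2 * θ * σ * ∑ z, u z * v z
        + σ * σ * ∑ z, v z * v z := by
  rw [Finset.mul_sum, Finset.mul_sum, Finset.mul_sum, ← Finset.sum_add_distrib,
    ← Finset.sum_add_distrib]
  exact Finset.sum_congr rfl fun z _ => by ring

/-- Strict positivity of the quadratic form on the zero-sum hyperplane. -/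
lemma aux_q_pos {A : Type*} [Fintype A] {a c : A} (hac : a ≠ c)
    (hA : 3 ≤ Fintype.card A) (v : A → ℝ) (hv : ∑ x, v x = 0) (hv0 : v ≠ 0) :
    0 < ∑ x, v x * v x - (4 / ((Fintype.card A : ℝ) - 2)) * (v a * v c) := by
  classical
  set m : ℝ := (Fintype.card A : ℝ) with hm
  have hm3 : (3 : ℝ) ≤ m := by rw [hm]; exact_mod_cast hA
  have hk : (0:ℝ) < m - 2 := by linarith
  set s : Finset A := Finset.univ \ {a, c} with hs
  have hsub : ({a, c} : Finset A) ⊆ Finset.univ := Finset.subset_univ _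
  have hsplit : ∀ f : A → ℝ, ∑ x ∈ s, f x + (f a + f c) = ∑ x, f x := by
    intro f
    rw [← Finset.sum_pair hac]
    exact Finset.sum_sdiff hsub
  have hcards : (s.card : ℝ) = m - 2 := by
    rw [hs, Finset.card_sdiff_of_subset hsub, Finset.card_pair hac, Finset.card_univ]
    have h2 : 2 ≤ Fintype.card A := by omega
    push_cast [Nat.cast_sub h2]
    ring
  have hCS : (∑ x ∈ s, v x) ^ 2 ≤ (s.card : ℝ) * ∑ x ∈ s, v x ^ 2 :=
    sq_sum_le_card_mul_sum_sq
  have hsumsq : ∀ x, v x ^ 2 = v x * v x := fun x => sq (v x) ▸ by ring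
  have hsv : ∑ x ∈ s, v x = -(v a + v c) := by
    have := hsplit v; linarith [hv]
  have hCS' : (v a + v c) ^ 2 ≤ (m - 2) * ∑ x ∈ s, v x * v x := by
    calc (v a + v c)^2 = (∑ x ∈ s, v x)^2 := by rw [hsv]; ring
      _ ≤ (s.card : ℝ) * ∑ x ∈ s, v x ^ 2 := hCS
      _ = (m - 2) * ∑ x ∈ s, v x * v x := by
          rw [hcards]; congr 1; exact Finset.sum_congr rfl fun x _ => sq (v x)
  have hsplitvv := hsplit (fun x => v x * v x)
  -- q := ∑ v² - (4/(m-2)) va vc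
  set Q : ℝ := ∑ x, v x * v x - (4 / (m - 2)) * (v a * v c) with hQ
  have hkQ : 0 < (m - 2) * Q := by
    have hexp : (m - 2) * Q
        = (m-2) * (∑ x ∈ s, v x * v x) + (m-2) * (v a * v a) + (m-2) * (v c * v c)
          - 4 * (v a * v c) := by
      rw [hQ, ← hsplitvv]
      field_simp
      ring
    by_cases hvac : v a = 0 ∧ v c = 0
    · obtain ⟨ha0, hc0⟩ := hvac
      obtain ⟨x, hx⟩ : ∃ x, v x ≠ 0 := by
        by_contra h; push_neg at h; exact hv0 (funext fun x => h x)
      have hxs : x ∈ s := by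
        rw [hs, Finset.mem_sdiff]
        refine ⟨Finset.mem_univ _, ?_⟩
        simp only [Finset.mem_insert, Finset.mem_singleton]
        rintro (rfl | rfl) <;> [exact hx ha0; exact hx hc0]
      have hpos : 0 < ∑ y ∈ s, v y * v y := by
        have hle : v x * v x ≤ ∑ y ∈ s, v y * v y :=
          Finset.single_le_sum (fun y _ => mul_self_nonneg (v y)) hxs
        nlinarith [mul_self_pos.mpr hx]
      rw [hexp, ha0, hc0]
      have hsnn : 0 ≤ ∑ y ∈ s, v y * v y := le_of_lt hpos
      nlinarith
    · have : v a ≠ 0 ∨ v c ≠ 0 := by tauto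
      have hpos2 : 0 < v a * v a + v c * v c := by
        rcases this with h | h
        · nlinarith [mul_self_pos.mpr h, mul_self_nonneg (v c)]
        · nlinarith [mul_self_pos.mpr h, mul_self_nonneg (v a)]
      rw [hexp]
      nlinarith [hCS', sq_nonneg (v a - v c), sq_nonneg (v a + v c)]
  nlinarith [hkQ, hk]

/-- First-order condition implies global maximality for the quadratic objective. -/
lemma aux_opt {A : Type*} [Fintype A] [DecidableEq A] (a c : A) (β : ℝ)
    (w π₀ : A → ℝ) (μ : ℝ)
    (hgrad : ∀ x, w x - 2 * π₀ x + (if x = a then β * π₀ c else 0)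
        + (if x = c then β * π₀ a else 0) = μ)
    (hq : ∀ v : A → ℝ, ∑ x, v x = 0 → 0 ≤ ∑ x, v x * v x - β * (v a * v c))
    (hsum : ∑ x, π₀ x = 1) (π' : A → ℝ) (hsum' : ∑ x, π' x = 1) :
    ∑ x, w x * π' x + (-(∑ x, π' x * π' x) + β * (π' a * π' c))
      ≤ ∑ x, w x * π₀ x + (-(∑ x, π₀ x * π₀ x) + β * (π₀ a * π₀ c)) := by
  set δ : A → ℝ := fun x => π' x - π₀ x with hδ
  have hδ0 : ∑ x, δ x = 0 := by
    rw [hδ, Finset.sum_sub_distrib, hsum, hsum']; ring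
  have hqδ := hq δ hδ0
  have e1 : ∑ x, π' x * π' x
      = ∑ x, π₀ x * π₀ x + 2 * ∑ x, π₀ x * δ x + ∑ x, δ x * δ x := by
    calc ∑ x, π' x * π' x
        = ∑ x, (1 * π₀ x + 1 * δ x) * (1 * π₀ x + 1 * δ x) :=
          Finset.sum_congr rfl fun x _ => by simp [hδ]
      _ = _ := by rw [aux_sum_sq_comb]; ring
  have e2 : ∑ x, w x * π' x = ∑ x, w x * π₀ x + ∑ x, w x * δ x := by
    rw [← Finset.sum_add_distrib]
    exact Finset.sum_congr rfl fun x _ => by simp [hδ]; ring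
  have h1 : ∑ x, (if x = a then β * π₀ c else 0) * δ x = β * π₀ c * δ a := by
    simp [ite_mul, Finset.sum_ite_eq']
  have h2 : ∑ x, (if x = c then β * π₀ a else 0) * δ x = β * π₀ a * δ c := by
    simp [ite_mul, Finset.sum_ite_eq']
  have e4 : ∑ x, (w x - 2 * π₀ x) * δ x + β * π₀ c * δ a + β * π₀ a * δ c = 0 := by
    calc ∑ x, (w x - 2 * π₀ x) * δ x + β * π₀ c * δ a + β * π₀ a * δ c
        = ∑ x, (w x - 2 * π₀ x) * δ x + ∑ x, (if x = a then β * π₀ c else 0) * δ x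
            + ∑ x, (if x = c then β * π₀ a else 0) * δ x := by rw [h1, h2]
      _ = ∑ x, ((w x - 2 * π₀ x) * δ x + (if x = a then β * π₀ c else 0) * δ x
            + (if x = c then β * π₀ a else 0) * δ x) := by
          rw [Finset.sum_add_distrib, Finset.sum_add_distrib]
      _ = ∑ x, μ * δ x := Finset.sum_congr rfl fun x _ => by
          rw [← hgrad x]; ring
      _ = μ * ∑ x, δ x := by rw [Finset.mul_sum]
      _ = 0 := by rw [hδ0]; ring
  have e5 : ∑ x, (w x - 2 * π₀ x) * δ x
      = ∑ x, w x * δ x - 2 * ∑ x, π₀ x * δ x := by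
    rw [Finset.mul_sum, ← Finset.sum_sub_distrib]
    exact Finset.sum_congr rfl fun x _ => by ring
  have e3 : π' a * π' c
      = π₀ a * π₀ c + π₀ a * δ c + π₀ c * δ a + δ a * δ c := by
    simp only [hδ]; ring
  rw [e1, e2, e3]
  nlinarith [hqδ, e4, e5]


/-- if `|A| ≥ 3`, there exists a continuous strictly concave
`φ : Δ_A → ℝ` such that no single Borel probability measure `d` on `ℝ^A` with integrable
coordinates reproduces, for every `w` and every action `a`, the unique maximizer of
`⟨w, π⟩ + φ(π)` over the simplex as the vector of choice probabilities of `d`.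
Hence regularized MDPs strictly subsume stochastic MDPs when there are at least three
actions. -/
theorem regularized_strictly_subsumes_stochastic {A : Type*} [Fintype A] [Nonempty A]
    (hA : 3 ≤ Fintype.card A)
    (Δ : Set (A → ℝ)) (hΔ : Δ = {π : A → ℝ | (∀ a, 0 ≤ π a) ∧ ∑ a, π a = 1}) :
    ∃ φ : (A → ℝ) → ℝ, ContinuousOn φ Δ ∧ StrictConcaveOn ℝ Δ φ ∧
      ∀ d : Measure (A → ℝ), IsProbabilityMeasure d →
        (∀ a : A, Integrable (fun ε : A → ℝ => ε a) d) →
        ¬ (∀ w : A → ℝ, ∀ π : A → ℝ, π ∈ Δ →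
            (∀ π' ∈ Δ, ∑ a, w a * π' a + φ π' ≤ ∑ a, w a * π a + φ π) →
            ∀ a : A, π a =
              (d {ε : A → ℝ | ∀ b : A, b ≠ a → w b + ε b < w a + ε a}).toReal) := by
  classical
  obtain ⟨a, c, hac⟩ : ∃ a c : A, a ≠ c :=
    Fintype.exists_pair_of_one_lt_card (by omega)
  set m : ℝ := (Fintype.card A : ℝ) with hm
  have hm3 : (3 : ℝ) ≤ m := by rw [hm]; exact_mod_cast hA
  have hm0 : (0 : ℝ) < m := by linarith
  have hk : (0 : ℝ) < m - 2 := by linarith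
  have hm0' : m ≠ 0 := hm0.ne'
  have hk' : m - 2 ≠ 0 := hk.ne'
  set β : ℝ := 4 / (m - 2) with hβ
  have hqpos : ∀ v : A → ℝ, ∑ x, v x = 0 → v ≠ 0 →
      0 < ∑ x, v x * v x - β * (v a * v c) := by
    intro v hv hv0
    have h := aux_q_pos hac hA v hv hv0
    rw [← hm, ← hβ] at h
    exact h
  have hqnn : ∀ v : A → ℝ, ∑ x, v x = 0 →
      0 ≤ ∑ x, v x * v x - β * (v a * v c) := by
    intro v hv
    rcases eq_or_ne v 0 with rfl | h
    · simp
    · exact (hqpos v hv h).le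
  refine ⟨fun π => -(∑ x, π x * π x) + β * (π a * π c), ?_, ?_, ?_⟩
  · -- continuity
    apply Continuous.continuousOn
    exact ((continuous_finset_sum _ fun x _ =>
        (continuous_apply x).mul (continuous_apply x)).neg).add
      (continuous_const.mul ((continuous_apply a).mul (continuous_apply c)))
  · -- strict concavity
    constructor
    · rw [hΔ]; exact convex_stdSimplex ℝ A
    · intro x hx y hy hxy θ σ hθ hσ hθσ
      rw [hΔ] at hx hy
      have hv0 : (fun z => x z - y z) ≠ 0 := by
        intro h
        apply hxy
        funext z
        have hz := congrFun h z
        simp only [Pi.zero_apply] at hz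
        linarith [hz]
      have hvs : ∑ z, (x z - y z) = 0 := by
        rw [Finset.sum_sub_distrib, hx.2, hy.2]; ring
      have esub : ∑ z, (x z - y z) * (x z - y z)
          = ∑ z, x z * x z - 2 * ∑ z, x z * y z + ∑ z, y z * y z := by
        calc ∑ z, (x z - y z) * (x z - y z)
            = ∑ z, (1 * x z + (-1) * y z) * (1 * x z + (-1) * y z) :=
              Finset.sum_congr rfl fun z _ => by ring
          _ = _ := by rw [aux_sum_sq_comb]; ring
      have hq' : 0 < (∑ z, x z * x z - 2 * ∑ z, x z * y z + ∑ z, y z * y z)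
          - β * ((x a - y a) * (x c - y c)) := by
        have h := hqpos (fun z => x z - y z) hvs hv0
        rw [esub] at h
        exact h
      have ecomb : ∑ z, (θ • x + σ • y) z * (θ • x + σ • y) z
          = θ * θ * ∑ z, x z * x z + 2 * θ * σ * ∑ z, x z * y z
            + σ * σ * ∑ z, y z * y z := by
        calc ∑ z, (θ • x + σ • y) z * (θ • x + σ • y) z
            = ∑ z, (θ * x z + σ * y z) * (θ * x z + σ * y z) :=
              Finset.sum_congr rfl fun z _ => by
                simp [Pi.add_apply, Pi.smul_apply, smul_eq_mul]
          _ = _ := aux_sum_sq_comb θ σ x y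
      simp only [smul_eq_mul]
      show θ * (-(∑ z, x z * x z) + β * (x a * x c))
          + σ * (-(∑ z, y z * y z) + β * (y a * y c))
        < -(∑ z, (θ • x + σ • y) z * (θ • x + σ • y) z)
          + β * ((θ • x + σ • y) a * (θ • x + σ • y) c)
      rw [ecomb]
      have ha' : (θ • x + σ • y) a = θ * x a + σ * y a := by
        simp [Pi.add_apply, Pi.smul_apply, smul_eq_mul]
      have hc' : (θ • x + σ • y) c = θ * x c + σ * y c := by
        simp [Pi.add_apply, Pi.smul_apply, smul_eq_mul]
      rw [ha', hc']
      have hσ1 : σ = 1 - θ := by linarith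
      subst hσ1
      nlinarith [mul_pos hθ hσ, hq']
  · -- main part
    intro d hd hint H
    set w0 : A → ℝ := fun x =>
      (if x = a then -(β / m) else 0) + (if x = c then -(β / m) else 0) with hw0
    set w1 : A → ℝ := fun x => w0 x + (if x = c then 1 / m else 0) with hw1
    set π0 : A → ℝ := fun _ => 1 / m with hπ0
    set π1 : A → ℝ := fun x =>
      if x = a then 1 / m + 1 / (2 * m ^ 2)
      else if x = c then 1 / m + (m - 1) / (2 * m ^ 2)
      else 1 / m - 1 / (2 * m * (m - 2)) with hπ1
    -- pointwise values
    have hπ1a : π1 a = 1 / m + 1 / (2 * m ^ 2) := by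
      rw [hπ1]; simp
    have hπ1c : π1 c = 1 / m + (m - 1) / (2 * m ^ 2) := by
      rw [hπ1]; simp [Ne.symm hac]
    have hπ1o : ∀ x, x ≠ a → x ≠ c → π1 x = 1 / m - 1 / (2 * m * (m - 2)) := by
      intro x hxa hxc; rw [hπ1]; simp [hxa, hxc]
    have hπ0x : ∀ x, π0 x = 1 / m := fun x => by rw [hπ0]
    have hw0a : w0 a = -(β / m) := by rw [hw0]; simp [hac]
    have hw0c : w0 c = -(β / m) := by rw [hw0]; simp [Ne.symm hac]
    have hw0o : ∀ x, x ≠ a → x ≠ c → w0 x = 0 := by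
      intro x hxa hxc; rw [hw0]; simp [hxa, hxc]
    have hw1a : w1 a = -(β / m) := by rw [hw1, hw0]; simp [hac]
    have hw1c : w1 c = -(β / m) + 1 / m := by rw [hw1, hw0]; simp [Ne.symm hac]
    have hw1o : ∀ x, x ≠ a → x ≠ c → w1 x = 0 := by
      intro x hxa hxc; rw [hw1, hw0]; simp [hxa, hxc]
    have hsplit : ∀ f : A → ℝ,
        ∑ x ∈ Finset.univ \ {a, c}, f x + (f a + f c) = ∑ x, f x := by
      intro f
      rw [← Finset.sum_pair hac]
      exact Finset.sum_sdiff (Finset.subset_univ _)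
    have hcards : (((Finset.univ \ {a, c} : Finset A)).card : ℝ) = m - 2 := by
      rw [Finset.card_sdiff_of_subset (Finset.subset_univ _), Finset.card_pair hac,
        Finset.card_univ]
      have h2 : 2 ≤ Fintype.card A := by omega
      rw [hm]
      push_cast [Nat.cast_sub h2]
      ring
    have hsum0 : ∑ x, π0 x = 1 := by
      rw [hπ0]
      rw [Finset.sum_const, Finset.card_univ, nsmul_eq_mul, ← hm]
      field_simp
    have hsum1 : ∑ x, π1 x = 1 := by
      rw [← hsplit π1]
      have hconst : ∀ x ∈ Finset.univ \ {a, c},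
          π1 x = 1 / m - 1 / (2 * m * (m - 2)) := by
        intro x hx
        rw [Finset.mem_sdiff] at hx
        have hxa : x ≠ a := fun h => hx.2 (by simp [h])
        have hxc : x ≠ c := fun h => hx.2 (by simp [h])
        exact hπ1o x hxa hxc
      rw [Finset.sum_congr rfl hconst, Finset.sum_const, nsmul_eq_mul, hcards,
        hπ1a, hπ1c]
      field_simp
      ring
    have hmem0 : π0 ∈ Δ := by
      rw [hΔ]
      refine ⟨fun x => ?_, hsum0⟩
      rw [hπ0x x]
      positivity
    have hmem1 : π1 ∈ Δ := by
      rw [hΔ]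
      refine ⟨fun x => ?_, hsum1⟩
      by_cases hxa : x = a
      · subst hxa
        rw [hπ1a]
        have h1 : (0:ℝ) < 1 / m := by positivity
        have h2 : (0:ℝ) ≤ 1 / (2 * m ^ 2) := by positivity
        linarith
      · by_cases hxc : x = c
        · subst hxc
          rw [hπ1c]
          have h1 : (0:ℝ) < 1 / m := by positivity
          have h2 : (0:ℝ) ≤ (m - 1) / (2 * m ^ 2) :=
            div_nonneg (by linarith) (by positivity)
          linarith
        · rw [hπ1o x hxa hxc, sub_nonneg,
            div_le_div_iff₀ (by positivity) hm0]
          nlinarith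
    have hgrad0 : ∀ x, w0 x - 2 * π0 x + (if x = a then β * π0 c else 0)
        + (if x = c then β * π0 a else 0) = -(2 / m) := by
      intro x
      by_cases hxa : x = a
      · subst hxa
        rw [if_pos rfl, if_neg hac, hw0a]
        simp only [hπ0]
        ring
      · by_cases hxc : x = c
        · subst hxc
          rw [if_neg hxa, if_pos rfl, hw0c]
          simp only [hπ0]
          ring
        · rw [if_neg hxa, if_neg hxc, hw0o x hxa hxc]
          simp only [hπ0]
          ring
    have hgrad1 : ∀ x, w1 x - 2 * π1 x + (if x = a then β * π1 c else 0)
        + (if x = c then β * π1 a else 0) = -(2 / m) + 1 / (m * (m - 2)) := by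
      intro x
      by_cases hxa : x = a
      · subst hxa
        rw [if_pos rfl, if_neg hac, hw1a, hπ1a, hπ1c, hβ]
        field_simp
        ring
      · by_cases hxc : x = c
        · subst hxc
          rw [if_neg hxa, if_pos rfl, hw1c, hπ1c, hπ1a, hβ]
          field_simp
          ring
        · rw [if_neg hxa, if_neg hxc, hw1o x hxa hxc, hπ1o x hxa hxc]
          field_simp
          ring
    have hopt0 : ∀ π' ∈ Δ, ∑ x, w0 x * π' x
          + (-(∑ x, π' x * π' x) + β * (π' a * π' c))
        ≤ ∑ x, w0 x * π0 x + (-(∑ x, π0 x * π0 x) + β * (π0 a * π0 c)) := by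
      intro π' hπ'
      rw [hΔ] at hπ'
      exact aux_opt a c β w0 π0 (-(2 / m)) hgrad0 hqnn hsum0 π' hπ'.2
    have hopt1 : ∀ π' ∈ Δ, ∑ x, w1 x * π' x
          + (-(∑ x, π' x * π' x) + β * (π' a * π' c))
        ≤ ∑ x, w1 x * π1 x + (-(∑ x, π1 x * π1 x) + β * (π1 a * π1 c)) := by
      intro π' hπ'
      rw [hΔ] at hπ'
      exact aux_opt a c β w1 π1 (-(2 / m) + 1 / (m * (m - 2)))
        hgrad1 hqnn hsum1 π' hπ'.2
    have h0 := H w0 π0 hmem0 hopt0 a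
    have h1 := H w1 π1 hmem1 hopt1 a
    have hsub : {ε : A → ℝ | ∀ b : A, b ≠ a → w1 b + ε b < w1 a + ε a}
        ⊆ {ε : A → ℝ | ∀ b : A, b ≠ a → w0 b + ε b < w0 a + ε a} := by
      intro ε hε b hb
      have h := hε b hb
      have hwa : w1 a = w0 a := by rw [hw1]; simp [hac]
      have hwb : w0 b ≤ w1 b := by
        rw [hw1]
        simp only
        have : (0:ℝ) ≤ (if b = c then 1 / m else 0) := by
          split_ifs
          · positivity
          · exact le_refl 0
        linarith
      calc w0 b + ε b ≤ w1 b + ε b := by linarith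
        _ < w1 a + ε a := h
        _ = w0 a + ε a := by rw [hwa]
    have hmono := measure_mono (μ := d) hsub
    have htr := ENNReal.toReal_mono (measure_ne_top d _) hmono
    rw [← h0, ← h1] at htr
    rw [hπ1a, hπ0x a] at htr
    have hfin : (0:ℝ) < 1 / (2 * m ^ 2) := by positivity
    linarith
end

section
/- Let U be the uniform probability measure on the interval [0,1]. There do not exist η > 0 and β ∈ ℝ such that for all r₁, r₂ ∈ ℝ: U({u ∈ [0,1] : r₁ + u ≥ r₂ + β}) · exp(r₂/η) = U({u ∈ [0,1] : r₁ + u < r₂ + β}) · exp(r₁/η). In other words, the choice probabilities of a two-action stochastic model whose first reward is perturbed by uniform [0,1] noise (shifted by any constants) cannot coincide with the softmax (logit) probabilities exp(rᵢ/η)/(exp(r₁/η)+exp(r₂/η)) for all reward values; hence the stochastic MDP framework strictly subsumes the EV-MDP and entropy-regularized MDP frameworks. -/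
open MeasureTheory

/-- for the uniform probability measure `U` on `[0,1]`, there exist no `η > 0`
and `β ∈ ℝ` such that for all rewards `r₁, r₂`,
`U({u ∈ [0,1] : r₁ + u ≥ r₂ + β}) · exp (r₂/η) = U({u ∈ [0,1] : r₁ + u < r₂ + β}) · exp (r₁/η)`;
i.e. the choice probabilities of a two-action stochastic model with uniform `[0,1]` noise on the
first reward can never coincide with the softmax (logit) probabilities for all reward values. -/
theorem uniform_noise_not_logit :
    ¬ ∃ η : ℝ, 0 < η ∧ ∃ β : ℝ, ∀ r₁ r₂ : ℝ,
      ((volume.restrict (Set.Icc (0 : ℝ) 1))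
            {u : ℝ | u ∈ Set.Icc (0 : ℝ) 1 ∧ r₂ + β ≤ r₁ + u}).toReal * Real.exp (r₂ / η) =
        ((volume.restrict (Set.Icc (0 : ℝ) 1))
            {u : ℝ | u ∈ Set.Icc (0 : ℝ) 1 ∧ r₁ + u < r₂ + β}).toReal * Real.exp (r₁ / η) := by
  rintro ⟨η, hη, β, h⟩
  have h2 := h 0 (2 - β)
  have e1 : {u : ℝ | u ∈ Set.Icc (0:ℝ) 1 ∧ 2 - β + β ≤ 0 + u} = ∅ := by
    ext u
    simp only [Set.mem_setOf_eq, Set.mem_Icc, Set.mem_empty_iff_false, iff_false, not_and]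
    rintro ⟨h0, h1⟩
    intro hle
    linarith
  have e2 : {u : ℝ | u ∈ Set.Icc (0:ℝ) 1 ∧ 0 + u < 2 - β + β} = Set.Icc (0:ℝ) 1 := by
    ext u
    simp only [Set.mem_setOf_eq, Set.mem_Icc]
    constructor
    · rintro ⟨hu, _⟩; exact hu
    · rintro ⟨h0, h1⟩; exact ⟨⟨h0, h1⟩, by linarith⟩
  rw [e1, e2] at h2
  rw [Measure.restrict_apply_self, Real.volume_Icc] at h2
  simp at h2
end

section
/- Let φ : Δ_A → ℝ be bounded (there exist L, U ∈ ℝ with L ≤ φ(π) ≤ U for all π ∈ Δ_A), and let a₁ ∈ A be any action with |A| ≥ 2. Then there exists w : A → ℝ such that the vertex policy e_{a₁} ∈ Δ_A (with e_{a₁}(a₁)=1 and e_{a₁}(a)=0 otherwise) is not a maximizer of ⟨w, π⟩ + φ(π) over Δ_A. Consequently no regularized MDP model with bounded regularizers can reproduce, for every reward function, a prescribed deterministic policy, so the regularized MDP framework does not cover the constrained MDP framework. -/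
/-- if `φ` is bounded on the simplex and `|A| ≥ 2`, then for each action `a₁`
there exists a reward vector `w` such that the vertex policy `e_{a₁}` is not a maximizer of
`⟨w, π⟩ + φ(π)` over the simplex. Hence no regularized MDP with bounded regularizers can
reproduce a prescribed deterministic policy for every reward function. -/
theorem bounded_regularizer_no_deterministic {A : Type*} [Fintype A] [DecidableEq A]
    (hA : 2 ≤ Fintype.card A)
    (Δ : Set (A → ℝ)) (hΔ : Δ = {π : A → ℝ | (∀ a, 0 ≤ π a) ∧ ∑ a, π a = 1})
    (φ : (A → ℝ) → ℝ) (L U : ℝ) (hbdd : ∀ π ∈ Δ, L ≤ φ π ∧ φ π ≤ U)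
    (a₁ : A) :
    ∃ w : A → ℝ,
      ¬ (∀ π ∈ Δ, ∑ a, w a * π a + φ π ≤
          ∑ a, w a * (fun a => if a = a₁ then (1 : ℝ) else 0) a +
            φ (fun a => if a = a₁ then (1 : ℝ) else 0)) := by
  obtain ⟨a₂, ha₂⟩ := Fintype.exists_ne_of_one_lt_card hA a₁
  -- reward: U - L + 1 on a₂, 0 elsewhere
  refine ⟨fun a => if a = a₂ then U - L + 1 else 0, ?_⟩
  intro h
  have hmem : ∀ b : A, (fun a => if a = b then (1 : ℝ) else 0) ∈ Δ := by
    intro b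
    rw [hΔ]
    refine ⟨fun a => by positivity, ?_⟩
    simp
  have h1 := hbdd _ (hmem a₁)
  have h2 := hbdd _ (hmem a₂)
  have := h _ (hmem a₂)
  simp only [mul_ite, mul_one, mul_zero, ite_and] at this
  rw [Finset.sum_ite_eq' Finset.univ a₂ (fun a => if a = a₂ then U - L + 1 else 0)] at this
  have hsum : (∑ x : A, if x = a₁ then if x = a₂ then U - L + 1 else 0 else 0) = 0 := by
    apply Finset.sum_eq_zero
    intro a _
    by_cases h1 : a = a₁ <;> by_cases h2 : a = a₂ <;> simp_all
  rw [hsum] at this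
  simp at this
  linarith [h1.2, h2.1]
end

section
/- Let π̄ ∈ Δ_A with π̄ a > 0 for every a ∈ A, let c > 0, and let w ∈ ℝ^A. Then the KL-constrained Bellman update satisfies the duality: sup { ⟨w, π⟩ : π ∈ Δ_A, KL(π ‖ π̄) ≤ c } = inf_{y > 0} ( c·y + y · log( Σ_{a∈A} π̄ a · exp(w a / y) ) ), where KL(π ‖ π̄) = Σ_{a∈A} π a · log( π a / π̄ a ) with the convention 0 · log 0 = 0. -/
lemma dv_aux {A : Type*} [Fintype A] (pibar : A → ℝ) (hpos : ∀ a, 0 < pibar a)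
    (p : A → ℝ) (h0 : ∀ a, 0 ≤ p a) (h1 : ∑ a, p a = 1) (v : A → ℝ) :
    ∑ a, p a * v a ≤ (∑ a, p a * Real.log (p a / pibar a))
      + Real.log (∑ a, pibar a * Real.exp (v a)) := by
  classical
  set s : Finset A := Finset.univ.filter (fun a => p a ≠ 0) with hs
  have hmem : ∀ a ∈ s, 0 < p a := by
    intro a ha
    have : p a ≠ 0 := by simpa [hs] using ha
    exact lt_of_le_of_ne (h0 a) (Ne.symm this)
  have hssum : ∑ a ∈ s, p a = 1 := by
    rw [hs, Finset.sum_filter_of_ne (fun a _ h => h)]; exact h1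
  have hsne : s.Nonempty := by
    rcases Finset.eq_empty_or_nonempty s with h | h
    · exfalso; rw [h] at hssum; simp at hssum
    · exact h
  set T : ℝ := ∑ a ∈ s, pibar a * Real.exp (v a) with hT
  have hTpos : 0 < T := Finset.sum_pos (fun a _ => mul_pos (hpos a) (Real.exp_pos _)) hsne
  -- per-term inequality
  have key : ∀ a ∈ s, p a * v a - p a * Real.log (p a / pibar a)
      ≤ pibar a * Real.exp (v a) / T - p a + p a * Real.log T := by
    intro a ha
    have hpa : 0 < p a := hmem a ha
    have hpb : 0 < pibar a := hpos a
    set t : ℝ := pibar a * Real.exp (v a) / (p a * T) with ht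
    have htpos : 0 < t := div_pos (mul_pos hpb (Real.exp_pos _)) (mul_pos hpa hTpos)
    have hlog : Real.log t ≤ t - 1 := Real.log_le_sub_one_of_pos htpos
    have hlogt : Real.log t = Real.log (pibar a) + v a - Real.log (p a) - Real.log T := by
      rw [ht, Real.log_div (mul_pos hpb (Real.exp_pos _)).ne' (mul_pos hpa hTpos).ne',
        Real.log_mul hpb.ne' (Real.exp_pos _).ne', Real.log_mul hpa.ne' hTpos.ne', Real.log_exp]
      ring
    have hld : Real.log (p a / pibar a) = Real.log (p a) - Real.log (pibar a) :=
      Real.log_div hpa.ne' hpb.ne'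
    have h2 : v a - Real.log (p a / pibar a) ≤ t - 1 + Real.log T := by
      rw [hld]; linarith [hlog, hlogt]
    have h3 : p a * (v a - Real.log (p a / pibar a)) ≤ p a * (t - 1 + Real.log T) :=
      mul_le_mul_of_nonneg_left h2 hpa.le
    have h4 : p a * t = pibar a * Real.exp (v a) / T := by
      rw [ht]; field_simp
    nlinarith [h3, h4]
  have hsum1 : ∑ a ∈ s, (pibar a * Real.exp (v a) / T - p a + p a * Real.log T) = Real.log T := by
    rw [Finset.sum_add_distrib, Finset.sum_sub_distrib, ← Finset.sum_div, ← hT,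
      ← Finset.sum_mul, hssum]
    field_simp
    ring
  have hmain : ∑ a ∈ s, (p a * v a - p a * Real.log (p a / pibar a)) ≤ Real.log T := by
    calc ∑ a ∈ s, (p a * v a - p a * Real.log (p a / pibar a))
        ≤ ∑ a ∈ s, (pibar a * Real.exp (v a) / T - p a + p a * Real.log T) :=
          Finset.sum_le_sum key
      _ = Real.log T := hsum1
  have hTle : Real.log T ≤ Real.log (∑ a, pibar a * Real.exp (v a)) := by
    apply Real.log_le_log hTpos
    apply Finset.sum_le_sum_of_subset_of_nonneg (Finset.subset_univ s)
    intro a _ _; exact le_of_lt (mul_pos (hpos a) (Real.exp_pos _))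
  have hsplit : ∑ a ∈ s, (p a * v a - p a * Real.log (p a / pibar a))
      = ∑ a, p a * v a - ∑ a, p a * Real.log (p a / pibar a) := by
    rw [Finset.sum_sub_distrib]
    congr 1
    · rw [hs, Finset.sum_filter_of_ne]; intro a _ h; intro hp0; apply h; rw [hp0]; ring
    · rw [hs, Finset.sum_filter_of_ne]; intro a _ h; intro hp0; apply h; rw [hp0]; ring
  linarith [hmain.trans hTle, hsplit.ge, hsplit.le]

/-- KL-constrained Bellman update duality: for `π̄` strictly positive in the
simplex and `c > 0`,
`sup {⟨w, π⟩ : π ∈ Δ, KL(π‖π̄) ≤ c} = inf_{y>0} (c·y + y·log (Σ_a π̄ a · exp (w a / y)))`,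
where `KL(π‖π̄) = Σ_a π a · log (π a / π̄ a)` (with `0 · log 0 = 0`, which holds automatically
since `Real.log 0 = 0`). -/
theorem kl_constrained_duality {A : Type*} [Fintype A] [Nonempty A]
    (Δ : Set (A → ℝ)) (hΔ : Δ = {π : A → ℝ | (∀ a, 0 ≤ π a) ∧ ∑ a, π a = 1})
    (pibar : A → ℝ) (hpibar : pibar ∈ Δ) (hpos : ∀ a, 0 < pibar a)
    (c : ℝ) (hc : 0 < c) (w : A → ℝ) :
    sSup {x : ℝ | ∃ π ∈ Δ, (∑ a, π a * Real.log (π a / pibar a)) ≤ c ∧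
        x = ∑ a, w a * π a} =
      sInf {x : ℝ | ∃ y : ℝ, 0 < y ∧
        x = c * y + y * Real.log (∑ a, pibar a * Real.exp (w a / y))} := by
  classical
  subst hΔ
  obtain ⟨hpb0, hpb1⟩ := hpibar
  set Z : ℝ → ℝ := fun y => ∑ a, pibar a * Real.exp (w a / y) with hZ
  have hZpos : ∀ y : ℝ, 0 < Z y := fun y =>
    Finset.sum_pos (fun a _ => mul_pos (hpos a) (Real.exp_pos _)) Finset.univ_nonempty
  set P : ℝ → A → ℝ := fun y a => pibar a * Real.exp (w a / y) / Z y with hP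
  have hP0 : ∀ y a, 0 ≤ P y a := fun y a => by
    rw [hP]; exact div_nonneg (mul_pos (hpos a) (Real.exp_pos _)).le (hZpos y).le
  have hP1 : ∀ y, ∑ a, P y a = 1 := fun y => by
    rw [hP]; simp only; rw [← Finset.sum_div]; exact div_self (hZpos y).ne'
  set g : ℝ → ℝ := fun y => ∑ a, P y a * Real.log (P y a / pibar a) with hg
  have hgform : ∀ y : ℝ, 0 < y → g y = (∑ a, w a * P y a) / y - Real.log (Z y) := by
    intro y hy
    have hterm : ∀ a, P y a * Real.log (P y a / pibar a)
        = w a * P y a / y - P y a * Real.log (Z y) := by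
      intro a
      have h1 : P y a / pibar a = Real.exp (w a / y) / Z y := by
        rw [hP]; simp only
        rw [div_div, mul_comm (Z y) (pibar a), mul_div_mul_left _ _ (hpos a).ne']
      rw [h1, Real.log_div (Real.exp_pos _).ne' (hZpos y).ne', Real.log_exp]
      field_simp
    rw [hg]
    simp only
    rw [Finset.sum_congr rfl (fun a _ => hterm a), Finset.sum_sub_distrib,
      ← Finset.sum_div, ← Finset.sum_mul, hP1 y, one_mul]
  have weak : ∀ q : A → ℝ, (∀ a, 0 ≤ q a) → (∑ a, q a) = 1 →
      (∑ a, q a * Real.log (q a / pibar a)) ≤ c → ∀ y : ℝ, 0 < y →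
      ∑ a, w a * q a ≤ c * y + y * Real.log (Z y) := by
    intro q hq0 hq1 hKL y hy
    have hdv := dv_aux pibar hpos q hq0 hq1 (fun a => w a / y)
    have h1 : ∑ a, q a * (w a / y) = (∑ a, w a * q a) / y := by
      rw [Finset.sum_div]; exact Finset.sum_congr rfl (fun a _ => by ring)
    rw [h1] at hdv
    have h2 : (∑ a, w a * q a) / y ≤ c + Real.log (Z y) := hdv.trans (by rw [hZ]; linarith)
    have h3 := (div_le_iff₀ hy).mp h2
    nlinarith [h3]
  have klnn : ∀ q : A → ℝ, (∀ a, 0 ≤ q a) → (∑ a, q a) = 1 →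
      0 ≤ ∑ a, q a * Real.log (q a / pibar a) := by
    intro q hq0 hq1
    have hdv := dv_aux pibar hpos q hq0 hq1 (fun _ => 0)
    simpa [hpb1] using hdv
  have hgnn : ∀ y, 0 ≤ g y := fun y => klnn _ (hP0 y) (hP1 y)
  -- the two sets
  set S : Set ℝ := {x : ℝ | ∃ π ∈ {π : A → ℝ | (∀ a, 0 ≤ π a) ∧ ∑ a, π a = 1},
      (∑ a, π a * Real.log (π a / pibar a)) ≤ c ∧ x = ∑ a, w a * π a} with hS
  set I : Set ℝ := {x : ℝ | ∃ y : ℝ, 0 < y ∧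
      x = c * y + y * Real.log (∑ a, pibar a * Real.exp (w a / y))} with hI
  have hImem : ∀ y : ℝ, 0 < y → (c * y + y * Real.log (Z y)) ∈ I := by
    intro y hy; rw [hI]; exact ⟨y, hy, by rw [hZ]⟩
  have hSmem : ∀ q : A → ℝ, (∀ a, 0 ≤ q a) → (∑ a, q a) = 1 →
      (∑ a, q a * Real.log (q a / pibar a)) ≤ c → (∑ a, w a * q a) ∈ S := by
    intro q hq0 hq1 hKL; rw [hS]; exact ⟨q, ⟨hq0, hq1⟩, hKL, rfl⟩
  have hpbKL : (∑ a, pibar a * Real.log (pibar a / pibar a)) ≤ c := by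
    have : ∀ a : A, pibar a / pibar a = 1 := fun a => div_self (hpos a).ne'
    simp [this, hc.le]
  have hSne : S.Nonempty := ⟨_, hSmem pibar hpb0 hpb1 hpbKL⟩
  have hIne : I.Nonempty := ⟨_, hImem 1 one_pos⟩
  have hSbdd : BddAbove S := by
    refine ⟨c * 1 + 1 * Real.log (Z 1), ?_⟩
    rintro x ⟨q, ⟨hq0, hq1⟩, hKL, rfl⟩
    exact weak q hq0 hq1 hKL 1 one_pos
  have hIbdd : BddBelow I := by
    refine ⟨∑ a, w a * pibar a, ?_⟩
    rintro x ⟨y, hy, rfl⟩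
    have := weak pibar hpb0 hpb1 hpbKL y hy
    rw [hZ] at this; exact this
  apply le_antisymm
  · apply csSup_le hSne
    intro x hx
    rw [hS] at hx
    obtain ⟨q, ⟨hq0, hq1⟩, hKL, rfl⟩ := hx
    apply le_csInf hIne
    rintro b ⟨y, hy, rfl⟩
    have := weak q hq0 hq1 hKL y hy
    rw [hZ] at this; exact this
  · -- strong duality
    -- auxiliary continuous formula for g
    set N : ℝ → ℝ := fun y => ∑ a, w a * (pibar a * Real.exp (w a / y)) with hN
    have hNform : ∀ y : ℝ, 0 < y → (∑ a, w a * P y a) = N y / Z y := by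
      intro y hy
      rw [hN, hP]; simp only
      rw [Finset.sum_div]
      exact Finset.sum_congr rfl (fun a _ => by ring)
    set h : ℝ → ℝ := fun y => N y / Z y / y - Real.log (Z y) with hh
    have hgh : ∀ y : ℝ, 0 < y → g y = h y := by
      intro y hy
      rw [hgform y hy, hh]; simp only
      rw [hNform y hy]
    have hcontZ : ContinuousOn Z (Set.Ioi (0:ℝ)) := by
      rw [hZ]
      apply continuousOn_finset_sum
      intro a _
      exact continuousOn_const.mul (Real.continuous_exp.comp_continuousOn
        (continuousOn_const.div continuousOn_id (fun y hy => ne_of_gt hy)))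
    have hcontN : ContinuousOn N (Set.Ioi (0:ℝ)) := by
      rw [hN]
      apply continuousOn_finset_sum
      intro a _
      exact continuousOn_const.mul (continuousOn_const.mul (Real.continuous_exp.comp_continuousOn
        (continuousOn_const.div continuousOn_id (fun y hy => ne_of_gt hy))))
    have hconth : ContinuousOn h (Set.Ioi (0:ℝ)) := by
      rw [hh]
      exact ((hcontN.div hcontZ (fun y _ => (hZpos y).ne')).div continuousOn_id
        (fun y hy => ne_of_gt hy)).sub (hcontZ.log (fun y _ => (hZpos y).ne'))
    have hZlim : Filter.Tendsto Z Filter.atTop (nhds 1) := by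
      rw [hZ]
      have h1 : Filter.Tendsto (fun y : ℝ => ∑ a, pibar a * Real.exp (w a / y))
          Filter.atTop (nhds (∑ a, pibar a * Real.exp 0)) := by
        apply tendsto_finset_sum
        intro a _
        exact tendsto_const_nhds.mul ((Real.continuous_exp.tendsto 0).comp
          (tendsto_const_nhds.div_atTop Filter.tendsto_id))
      simpa [hpb1] using h1
    have hNlim : Filter.Tendsto N Filter.atTop (nhds (∑ a, w a * pibar a)) := by
      rw [hN]
      have h1 : Filter.Tendsto (fun y : ℝ => ∑ a, w a * (pibar a * Real.exp (w a / y)))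
          Filter.atTop (nhds (∑ a, w a * (pibar a * Real.exp 0))) := by
        apply tendsto_finset_sum
        intro a _
        exact tendsto_const_nhds.mul (tendsto_const_nhds.mul
          ((Real.continuous_exp.tendsto 0).comp (tendsto_const_nhds.div_atTop Filter.tendsto_id)))
      simpa using h1
    have hhlim : Filter.Tendsto h Filter.atTop (nhds 0) := by
      rw [hh]
      have h1 : Filter.Tendsto (fun y => N y / Z y / y) Filter.atTop (nhds 0) :=
        ((hNlim.div hZlim one_ne_zero).div_atTop Filter.tendsto_id)
      have h2 : Filter.Tendsto (fun y => Real.log (Z y)) Filter.atTop (nhds 0) := by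
        have := ((Real.continuousAt_log one_ne_zero).tendsto).comp hZlim
        simpa [Function.comp_def] using this
      simpa using h1.sub h2
    by_cases hex : ∃ y : ℝ, 0 < y ∧ c < g y
    · obtain ⟨y₀, hy₀, hgc⟩ := hex
      obtain ⟨Y, hYlt, hYge⟩ :=
        ((hhlim.eventually (gt_mem_nhds hc)).and (Filter.eventually_ge_atTop (y₀ + 1))).exists
      have hy₀Y : y₀ ≤ Y := by linarith
      have hsub : Set.Icc y₀ Y ⊆ Set.Ioi (0:ℝ) := fun z hz => lt_of_lt_of_le hy₀ hz.1
      have hicc := intermediate_value_Icc' hy₀Y (hconth.mono hsub)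
      have hcmem : c ∈ Set.Icc (h Y) (h y₀) := ⟨hYlt.le, by rw [← hgh y₀ hy₀]; exact hgc.le⟩
      obtain ⟨ys, hysIcc, hyseq⟩ := hicc hcmem
      have hys : 0 < ys := lt_of_lt_of_le hy₀ hysIcc.1
      have hgys : g ys = c := by rw [hgh ys hys]; exact hyseq
      have hval : ∑ a, w a * P ys a = c * ys + ys * Real.log (Z ys) := by
        have h1 := hgform ys hys
        rw [hgys] at h1
        have h2 : (∑ a, w a * P ys a) / ys = c + Real.log (Z ys) := by linarith
        have h3 := (div_eq_iff hys.ne').mp h2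
        rw [h3]; ring
      calc sInf I ≤ c * ys + ys * Real.log (Z ys) := csInf_le hIbdd (hImem ys hys)
        _ = ∑ a, w a * P ys a := hval.symm
        _ ≤ sSup S := le_csSup hSbdd (hSmem (P ys) (hP0 ys) (hP1 ys) hgys.le)
    · push_neg at hex
      apply le_of_forall_pos_le_add
      intro ε hε
      set y : ℝ := ε / c with hy
      have hy0 : 0 < y := div_pos hε hc
      have hfeas : g y ≤ c := hex y hy0
      have h1 : sInf I ≤ c * y + y * Real.log (Z y) := csInf_le hIbdd (hImem y hy0)
      have h2 : c * y + y * Real.log (Z y) = (∑ a, w a * P y a) + y * (c - g y) := by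
        rw [hgform y hy0]; field_simp; ring
      have h3 : y * (c - g y) ≤ y * c :=
        mul_le_mul_of_nonneg_left (by linarith [hgnn y]) hy0.le
      have h4 : (∑ a, w a * P y a) ≤ sSup S :=
        le_csSup hSbdd (hSmem (P y) (hP0 y) (hP1 y) hfeas)
      have h5 : y * c = ε := by rw [hy]; field_simp
      linarith
end

section
/- Let w ∈ ℝ^A and σ : A → ℝ with σ a ≥ 0 for all a, and let D be the set of Borel probability measures d on ℝ^A whose marginals satisfy ∫ ε a dd(ε) = 0 and ∫ (ε a)² dd(ε) = (σ a)² for every a ∈ A. Then the tight distributionally robust bound sup_{d∈D} ∫ max_{a∈A} (w a + ε a) dd(ε) equals max_{π∈Δ_A} Σ_{a∈A} ( π a · w a + σ a · √( π a · (1 − π a) ) ). Hence the distributionally stochastic MDP model with zero-mean marginal-moment ambiguity set is equivalent to the regularized MDP model with regularizer φ(π) = Σ_{a∈A} σ a · √(π a (1 − π a)). -/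
open MeasureTheory

lemma aux_nonpos {X k : ℝ} (hk : 0 ≤ k) (h : ∀ t : ℝ, 0 < t → X ≤ k * t) : X ≤ 0 := by
  refine le_of_forall_pos_le_add fun ε hε => ?_
  rcases eq_or_lt_of_le hk with rfl | hk'
  · simpa using (h 1 one_pos).trans (by linarith)
  · have := h (ε / k) (by positivity)
    rw [mul_div_cancel₀ _ hk'.ne'] at this
    linarith

lemma aux_young {X c c' : ℝ} (hc : 0 ≤ c) (hc' : 0 ≤ c')
    (h : ∀ t : ℝ, 0 < t → X ≤ c / t + c' * t) : X ≤ 2 * Real.sqrt (c * c') := by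
  rcases eq_or_lt_of_le hc with rfl | hcpos
  · simp only [zero_mul, Real.sqrt_zero, mul_zero]
    exact aux_nonpos hc' (fun t ht => by simpa using h t ht)
  rcases eq_or_lt_of_le hc' with rfl | hcpos'
  · simp only [mul_zero, Real.sqrt_zero]
    refine aux_nonpos hc fun t ht => ?_
    have := h (1 / t) (by positivity)
    calc X ≤ c / (1/t) + 0 * (1/t) := this
    _ = c * t := by field_simp; ring
  · set t := Real.sqrt (c / c') with ht
    have htpos : 0 < t := Real.sqrt_pos.2 (by positivity)
    have h1 : c / t = Real.sqrt (c * c') := by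
      rw [div_eq_iff htpos.ne', ht, ← Real.sqrt_mul (by positivity)]
      rw [show c * c' * (c / c') = c ^ 2 by field_simp]
      exact (Real.sqrt_sq hc).symm
    have h2 : c' * t = Real.sqrt (c * c') := by
      nth_rewrite 1 [show c' = Real.sqrt (c' ^ 2) from (Real.sqrt_sq hc').symm]
      rw [ht, ← Real.sqrt_mul (by positivity)]
      congr 1
      field_simp
    have := h t htpos
    rw [h1, h2] at this
    linarith
lemma key_cs {Ω : Type*} [MeasurableSpace Ω] (d : Measure Ω) [IsProbabilityMeasure d]
    (f : Ω → ℝ) (hf : Integrable f d) (hf2 : Integrable (fun ω => f ω ^ 2) d)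
    (hmean : ∫ ω, f ω ∂d = 0) (s : ℝ) (hs : 0 ≤ s) (hvar : ∫ ω, f ω ^ 2 ∂d = s ^ 2)
    (E : Set Ω) (hE : MeasurableSet E) :
    ∫ ω in E, f ω ∂d ≤ s * Real.sqrt ((d E).toReal * (1 - (d E).toReal)) := by
  set p : ℝ := (d E).toReal with hp
  have hp0 : 0 ≤ p := ENNReal.toReal_nonneg
  have hp1 : p ≤ 1 := by
    rw [hp]
    exact ENNReal.toReal_le_of_le_ofReal one_pos.le (by simpa using prob_le_one)
  set χ : Ω → ℝ := E.indicator (fun _ => (1 : ℝ)) with hχ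
  have hχint : Integrable χ d := (integrable_const (1:ℝ)).indicator hE
  have hχsq : ∀ ω, χ ω ^ 2 = χ ω := by
    intro ω
    by_cases h : ω ∈ E <;> simp [hχ, Set.indicator_of_mem, Set.indicator_of_notMem, h]
  have hχval : ∫ ω, χ ω ∂d = p := by
    rw [hχ, integral_indicator_const _ hE]
    simp [hp, smul_eq_mul]
    rfl
  -- integral of (χ - p)^2 = p - p^2
  have hsqint : Integrable (fun ω => (χ ω - p) ^ 2) d := by
    have : (fun ω => (χ ω - p) ^ 2) = fun ω => (1 - 2 * p) * χ ω + p ^ 2 := by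
      funext ω
      have := hχsq ω
      ring_nf
      nlinarith [hχsq ω]
    rw [this]
    exact (hχint.const_mul _).add (integrable_const _)
  have hsqval : ∫ ω, (χ ω - p) ^ 2 ∂d = p * (1 - p) := by
    have h1 : (fun ω => (χ ω - p) ^ 2) = fun ω => (1 - 2 * p) * χ ω + p ^ 2 := by
      funext ω; nlinarith [hχsq ω]
    rw [h1, integral_add ((hχint.const_mul _)) (integrable_const _),
      integral_const_mul, hχval, integral_const]
    simp
    ring
  -- integral of (χ - p) * f = ∫_E f
  have hprodint : Integrable (fun ω => (χ ω - p) * f ω) d := by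
    have h1 : (fun ω => (χ ω - p) * f ω) = fun ω => E.indicator f ω - p * f ω := by
      funext ω
      by_cases h : ω ∈ E <;>
        simp [hχ, Set.indicator_of_mem, Set.indicator_of_notMem, h] <;> ring
    rw [h1]
    exact (hf.indicator hE).sub (hf.const_mul _)
  have hprodval : ∫ ω, (χ ω - p) * f ω ∂d = ∫ ω in E, f ω ∂d := by
    have h1 : (fun ω => (χ ω - p) * f ω) = fun ω => E.indicator f ω - p * f ω := by
      funext ω
      by_cases h : ω ∈ E <;>
        simp [hχ, Set.indicator_of_mem, Set.indicator_of_notMem, h] <;> ring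
    rw [h1, integral_sub (hf.indicator hE) (hf.const_mul _), integral_const_mul, hmean,
      integral_indicator hE]
    ring
  have key : ∀ t : ℝ, 0 < t →
      ∫ ω in E, f ω ∂d ≤ (p * (1 - p) / 2) / t + (s ^ 2 / 2) * t := by
    intro t ht
    have hpt : ∀ ω, (χ ω - p) * f ω ≤ (χ ω - p) ^ 2 / (2 * t) + t * f ω ^ 2 / 2 := by
      intro ω
      have h2t : (χ ω - p) * f ω * (2 * t) ≤ (χ ω - p) ^ 2 + t ^ 2 * f ω ^ 2 := by
        nlinarith [sq_nonneg (χ ω - p - t * f ω)]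
      calc (χ ω - p) * f ω = ((χ ω - p) * f ω * (2 * t)) / (2 * t) := by field_simp
        _ ≤ ((χ ω - p) ^ 2 + t ^ 2 * f ω ^ 2) / (2 * t) :=
            div_le_div_of_nonneg_right h2t (by positivity) |>.trans_eq rfl
        _ = (χ ω - p) ^ 2 / (2 * t) + t * f ω ^ 2 / 2 := by field_simp
    have hint : ∫ ω, (χ ω - p) * f ω ∂d ≤
        ∫ ω, ((χ ω - p) ^ 2 / (2 * t) + t * f ω ^ 2 / 2) ∂d := by
      refine integral_mono hprodint ?_ hpt
      exact ((hsqint.div_const _).add ((hf2.const_mul t).div_const _))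
    rw [hprodval] at hint
    calc ∫ ω in E, f ω ∂d ≤ _ := hint
      _ = (∫ ω, (χ ω - p)^2 ∂d) / (2*t) + t * (∫ ω, f ω ^2 ∂d) / 2 := by
          rw [integral_add (hsqint.div_const _) ((hf2.const_mul t).div_const _),
            integral_div, integral_div, integral_const_mul]
      _ = (p * (1 - p) / 2) / t + (s ^ 2 / 2) * t := by
          rw [hsqval, hvar]; ring
  have := aux_young (by nlinarith) (by positivity) key
  calc ∫ ω in E, f ω ∂d ≤ 2 * Real.sqrt (p * (1 - p) / 2 * (s ^ 2 / 2)) := this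
    _ = s * Real.sqrt (p * (1 - p)) := by
        set q := Real.sqrt (p * (1 - p)) with hq
        have hq0 : 0 ≤ q := Real.sqrt_nonneg _
        have hqsq : q ^ 2 = p * (1 - p) := Real.sq_sqrt (by nlinarith)
        rw [show p * (1-p)/2 * (s^2/2) = (s * q / 2)^2 by rw [div_pow, mul_pow, hqsq]; ring,
          Real.sqrt_sq (by positivity)]
        ring
lemma integrable_dirac' {Ω : Type*} [MeasurableSpace Ω] {f : Ω → ℝ} (hf : Measurable f)
    (pt : Ω) : Integrable f (Measure.dirac pt) := by
  refine ⟨hf.aestronglyMeasurable, ?_⟩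
  rw [HasFiniteIntegral, MeasureTheory.lintegral_dirac' _ hf.enorm]
  exact enorm_lt_top

lemma integral_discrete {ι : Type*} [Fintype ι] {Ω : Type*} [MeasurableSpace Ω]
    (c : ι → ℝ) (hc : ∀ i, 0 ≤ c i) (pt : ι → Ω) {f : Ω → ℝ} (hf : Measurable f) :
    Integrable f (∑ i : ι, ENNReal.ofReal (c i) • Measure.dirac (pt i)) ∧
      ∫ ω, f ω ∂(∑ i : ι, ENNReal.ofReal (c i) • Measure.dirac (pt i)) =
        ∑ i : ι, c i * f (pt i) := by
  have hInt : ∀ i ∈ Finset.univ, Integrable f (ENNReal.ofReal (c i) • Measure.dirac (pt i)) :=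
    fun i _ => (integrable_dirac' hf (pt i)).smul_measure ENNReal.ofReal_ne_top
  constructor
  · exact integrable_finset_sum_measure.2 hInt
  · rw [integral_finset_sum_measure hInt]
    refine Finset.sum_congr rfl fun i _ => ?_
    rw [integral_smul_measure, integral_dirac' f _ hf.stronglyMeasurable,
      ENNReal.toReal_ofReal (hc i), smul_eq_mul]
lemma construction {A : Type*} [Fintype A] [Nonempty A]
    (w : A → ℝ) (σ : A → ℝ) (hσ : ∀ a, 0 ≤ σ a) (π : A → ℝ)
    (hπ0 : ∀ a, 0 ≤ π a) (hπ1 : ∑ a, π a = 1) :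
    ∃ d : Measure (A → ℝ), IsProbabilityMeasure d ∧
      (∀ a : A, Integrable (fun ε : A → ℝ => ε a) d ∧ (∫ ε, ε a ∂d) = 0 ∧
        Integrable (fun ε : A → ℝ => (ε a) ^ 2) d ∧ (∫ ε, (ε a) ^ 2 ∂d) = (σ a) ^ 2) ∧
      ∑ a, (π a * w a + σ a * Real.sqrt (π a * (1 - π a))) ≤
        ∫ ε, (Finset.univ.sup' Finset.univ_nonempty (fun a : A => w a + ε a)) ∂d := by
  classical
  have hπle1 : ∀ a, π a ≤ 1 := by
    intro a
    calc π a ≤ ∑ b, π b := Finset.single_le_sum (fun b _ => hπ0 b) (Finset.mem_univ a)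
      _ = 1 := hπ1
  set y : A × Bool → (A → ℝ) := fun z a =>
    if π a = 0 ∨ π a = 1 then (if z.2 then σ a else -σ a)
    else (if a = z.1 then σ a * Real.sqrt ((1 - π a) / π a)
          else -(σ a * Real.sqrt (π a / (1 - π a)))) with hy
  set c : A × Bool → ℝ := fun z => π z.1 / 2 with hc
  have hc0 : ∀ z, 0 ≤ c z := fun z => by have := hπ0 z.1; rw [hc]; positivity
  set d : Measure (A → ℝ) := ∑ z : A × Bool, ENNReal.ofReal (c z) • Measure.dirac (y z) with hd
  have hint : ∀ {f : (A → ℝ) → ℝ}, Measurable f →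
      Integrable f d ∧ ∫ ε, f ε ∂d = ∑ z : A × Bool, c z * f (y z) :=
    fun hf => integral_discrete c hc0 y hf
  have hpair : ∀ g : A × Bool → ℝ, ∑ z : A × Bool, c z * g z
      = ∑ b : A, (π b / 2 * g (b, true) + π b / 2 * g (b, false)) := by
    intro g
    rw [Fintype.sum_prod_type]
    refine Finset.sum_congr rfl fun b _ => ?_
    simp [hc]
  have hmid : ∀ a, ¬(π a = 0 ∨ π a = 1) → (0 < π a ∧ π a < 1) := by
    intro a h
    push_neg at h
    exact ⟨(hπ0 a).lt_of_ne (Ne.symm h.1), (hπle1 a).lt_of_ne h.2⟩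
  have hcsum : ∑ z : A × Bool, c z = 1 := by
    have := hpair (fun _ => 1)
    simp only [mul_one] at this
    rw [this, ← hπ1]
    exact Finset.sum_congr rfl fun b _ => by ring
  have hprob : IsProbabilityMeasure d := by
    constructor
    rw [hd]
    simp only [Measure.coe_finset_sum, Finset.sum_apply, Measure.smul_apply,
      measure_univ, smul_eq_mul, mul_one]
    rw [← ENNReal.ofReal_sum_of_nonneg (fun z _ => hc0 z), hcsum, ENNReal.ofReal_one]
  -- identities
  have e1 : ∀ a, 0 < π a → π a < 1 →
      π a * (σ a * Real.sqrt ((1 - π a) / π a)) = σ a * Real.sqrt (π a * (1 - π a)) := by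
    intro a h0 h1
    rw [mul_left_comm]
    congr 1
    rw [show π a * (1 - π a) = π a ^ 2 * ((1 - π a) / π a) by field_simp,
      Real.sqrt_mul (sq_nonneg _), Real.sqrt_sq h0.le]
  have e2 : ∀ a, 0 < π a → π a < 1 →
      (1 - π a) * (σ a * Real.sqrt (π a / (1 - π a))) = σ a * Real.sqrt (π a * (1 - π a)) := by
    intro a h0 h1
    have hne : (1 : ℝ) - π a ≠ 0 := by linarith
    rw [mul_left_comm]
    congr 1
    rw [show π a * (1 - π a) = (1 - π a) ^ 2 * (π a / (1 - π a)) by field_simp,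
      Real.sqrt_mul (sq_nonneg _), Real.sqrt_sq (by linarith)]
  -- sum splitting: ∑ b, π b * (if a = b then H else L) = π a * H + (1 - π a) * L
  have hsplit : ∀ (a : A) (H L : ℝ), (∑ b, π b * (if a = b then H else L))
      = π a * H + (1 - π a) * L := by
    intro a H L
    have h1 : ∀ b ∈ Finset.univ, π b * (if a = b then H else L)
        = π b * L + (if a = b then π b * (H - L) else 0) := by
      intro b _
      by_cases h : a = b <;> simp [h] <;> ring
    rw [Finset.sum_congr rfl h1, Finset.sum_add_distrib, ← Finset.sum_mul,
      Finset.sum_ite_eq]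
    simp [hπ1]
    ring
  refine ⟨d, hprob, fun a => ?_, ?_⟩
  · -- moment conditions for coordinate a
    have hma : Measurable (fun ε : A → ℝ => ε a) := measurable_pi_apply a
    have hma2 : Measurable (fun ε : A → ℝ => (ε a) ^ 2) := hma.pow_const 2
    obtain ⟨hI1, hV1⟩ := hint hma
    obtain ⟨hI2, hV2⟩ := hint hma2
    refine ⟨hI1, ?_, hI2, ?_⟩
    · rw [hV1, hpair (fun z => y z a)]
      by_cases hdeg : π a = 0 ∨ π a = 1
      · refine Finset.sum_eq_zero fun b _ => ?_
        simp only [hy, hdeg, if_true]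
        norm_num
      · obtain ⟨h0, h1⟩ := hmid a hdeg
        have step : ∀ b ∈ Finset.univ,
            π b / 2 * y (b, true) a + π b / 2 * y (b, false) a
            = π b * (if a = b then σ a * Real.sqrt ((1 - π a) / π a)
                else -(σ a * Real.sqrt (π a / (1 - π a)))) := by
          intro b _
          simp only [hy, hdeg, if_false]
          ring
        rw [Finset.sum_congr rfl step, hsplit]
        have := e2 a h0 h1
        have := e1 a h0 h1
        linarith
    · rw [hV2, hpair (fun z => (y z a) ^ 2)]
      by_cases hdeg : π a = 0 ∨ π a = 1
      · have step : ∀ b ∈ Finset.univ,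
            π b / 2 * y (b, true) a ^ 2 + π b / 2 * y (b, false) a ^ 2
            = π b * σ a ^ 2 := by
          intro b _
          simp only [hy, hdeg, if_true]
          norm_num
          ring
        rw [Finset.sum_congr rfl step, ← Finset.sum_mul, hπ1, one_mul]
      · obtain ⟨h0, h1⟩ := hmid a hdeg
        have hne : (1 : ℝ) - π a ≠ 0 := by linarith
        have hhi : (σ a * Real.sqrt ((1 - π a) / π a)) ^ 2 = σ a ^ 2 * ((1 - π a) / π a) := by
          rw [mul_pow, Real.sq_sqrt (div_nonneg (by linarith) h0.le)]
        have hlo : (-(σ a * Real.sqrt (π a / (1 - π a)))) ^ 2 = σ a ^ 2 * (π a / (1 - π a)) := by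
          rw [neg_pow, mul_pow, Real.sq_sqrt (div_nonneg h0.le (by linarith))]
          simp
        have step : ∀ b ∈ Finset.univ,
            π b / 2 * y (b, true) a ^ 2 + π b / 2 * y (b, false) a ^ 2
            = π b * (if a = b then (σ a * Real.sqrt ((1 - π a) / π a)) ^ 2
                else (-(σ a * Real.sqrt (π a / (1 - π a)))) ^ 2) := by
          intro b _
          simp only [hy, hdeg, if_false]
          by_cases h : a = b <;> simp [h] <;> ring
        rw [Finset.sum_congr rfl step, hsplit, hhi, hlo]
        field_simp
        ring
  · -- lower bound for the expected maximum
    set M : (A → ℝ) → ℝ :=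
      fun ε => Finset.univ.sup' Finset.univ_nonempty (fun a : A => w a + ε a) with hM
    have hMmeas : Measurable M := by
      have hfun : M = Finset.univ.sup' Finset.univ_nonempty (fun a (ε : A → ℝ) => w a + ε a) := by
        funext ε
        rw [Finset.sup'_apply]
      rw [hfun]
      exact Finset.measurable_sup' _ fun a _ => measurable_const.add (measurable_pi_apply a)
    obtain ⟨hMint, hMval⟩ := hint hMmeas
    rw [hMval, hpair (fun z => M (y z))]
    refine Finset.sum_le_sum fun b _ => ?_
    have hle : ∀ r : Bool, w b + y (b, r) b ≤ M (y (b, r)) :=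
      fun r => Finset.le_sup' (fun a : A => w a + y (b, r) a) (Finset.mem_univ b)
    have h0b := hπ0 b
    have l1 := mul_le_mul_of_nonneg_left (hle true) (by positivity : (0:ℝ) ≤ π b / 2)
    have l2 := mul_le_mul_of_nonneg_left (hle false) (by positivity : (0:ℝ) ≤ π b / 2)
    by_cases hdeg : π b = 0 ∨ π b = 1
    · have hsq : Real.sqrt (π b * (1 - π b)) = 0 := by
        rcases hdeg with h | h <;> rw [h] <;> simp
      have hyt : y (b, true) b = σ b := by simp [hy, hdeg]
      have hyf : y (b, false) b = -σ b := by simp [hy, hdeg]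
      rw [hyt] at l1
      rw [hyf] at l2
      rw [hsq]
      have key : π b * w b + σ b * 0
          = π b / 2 * (w b + σ b) + π b / 2 * (w b + -σ b) := by ring
      linarith
    · obtain ⟨h0, h1⟩ := hmid b hdeg
      have hyb : ∀ r : Bool, y (b, r) b = σ b * Real.sqrt ((1 - π b) / π b) := by
        intro r
        simp [hy, hdeg]
      rw [hyb true] at l1
      rw [hyb false] at l2
      have key : π b * w b + σ b * Real.sqrt (π b * (1 - π b))
          = π b / 2 * (w b + σ b * Real.sqrt ((1 - π b) / π b))
            + π b / 2 * (w b + σ b * Real.sqrt ((1 - π b) / π b)) := by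
        rw [← e1 b h0 h1]
        ring
      linarith
lemma upper_bound {A : Type*} [Fintype A] [Nonempty A]
    (w : A → ℝ) (σ : A → ℝ) (hσ : ∀ a, 0 ≤ σ a) (d : Measure (A → ℝ))
    (hd : IsProbabilityMeasure d)
    (hmom : ∀ a : A, Integrable (fun ε : A → ℝ => ε a) d ∧ (∫ ε, ε a ∂d) = 0 ∧
      Integrable (fun ε : A → ℝ => (ε a) ^ 2) d ∧ (∫ ε, (ε a) ^ 2 ∂d) = (σ a) ^ 2) :
    ∃ π : A → ℝ, ((∀ a, 0 ≤ π a) ∧ ∑ a, π a = 1) ∧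
      ∫ ε, (Finset.univ.sup' Finset.univ_nonempty (fun a : A => w a + ε a)) ∂d ≤
        ∑ a, (π a * w a + σ a * Real.sqrt (π a * (1 - π a))) := by
  classical
  set M : (A → ℝ) → ℝ :=
    fun ε => Finset.univ.sup' Finset.univ_nonempty (fun a : A => w a + ε a) with hM
  have hMmeas : Measurable M := by
    have hfun : M = Finset.univ.sup' Finset.univ_nonempty (fun a (ε : A → ℝ) => w a + ε a) := by
      funext ε
      rw [Finset.sup'_apply]
    rw [hfun]
    exact Finset.measurable_sup' _ fun a _ => measurable_const.add (measurable_pi_apply a)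
  set e := Fintype.equivFin A with he
  set E : A → Set (A → ℝ) :=
    fun a => {ε | (w a + ε a = M ε) ∧ ∀ b, e b < e a → w b + ε b ≠ M ε} with hE
  have hEmeas : ∀ a, MeasurableSet (E a) := by
    intro a
    have h1 : MeasurableSet {ε : A → ℝ | w a + ε a = M ε} :=
      measurableSet_eq_fun (measurable_const.add (measurable_pi_apply a)) hMmeas
    have h2 : ∀ b : A, MeasurableSet {ε : A → ℝ | e b < e a → w b + ε b ≠ M ε} := by
      intro b
      by_cases hb : e b < e a
      · have : {ε : A → ℝ | e b < e a → w b + ε b ≠ M ε} = {ε | w b + ε b = M ε}ᶜ := by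
          ext ε; simp [hb]
        rw [this]
        exact (measurableSet_eq_fun (measurable_const.add (measurable_pi_apply b)) hMmeas).compl
      · have : {ε : A → ℝ | e b < e a → w b + ε b ≠ M ε} = Set.univ := by
          ext ε; simp [hb]
        rw [this]
        exact MeasurableSet.univ
    have hrepr : E a = {ε : A → ℝ | w a + ε a = M ε} ∩
        ⋂ b, {ε : A → ℝ | e b < e a → w b + ε b ≠ M ε} := by
      ext ε
      simp only [hE, Set.mem_setOf_eq, Set.mem_inter_iff, Set.mem_iInter]
    rw [hrepr]
    exact h1.inter (MeasurableSet.iInter h2)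
  have attain : ∀ ε, ∃ a, ε ∈ E a := by
    intro ε
    obtain ⟨a0, _, hval⟩ :=
      Finset.exists_mem_eq_sup' (Finset.univ_nonempty (α := A)) (fun a => w a + ε a)
    set F : Finset A := Finset.univ.filter (fun a => w a + ε a = M ε) with hF
    have hFne : F.Nonempty := ⟨a0, by simp [hF, hM, hval.symm]⟩
    obtain ⟨a, haF, hmin⟩ := Finset.exists_min_image F e hFne
    refine ⟨a, (Finset.mem_filter.1 haF).2, fun b hb hbeq => ?_⟩
    have hbF : b ∈ F := by simp [hF, hbeq]
    exact absurd (hmin b hbF) (not_le.2 hb)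
  have unique : ∀ ε a b, ε ∈ E a → ε ∈ E b → a = b := by
    intro ε a b ha hb
    by_contra hne
    have hee : e a ≠ e b := fun h => hne (e.injective h)
    rcases hee.lt_or_gt with h | h
    · exact hb.2 a h ha.1
    · exact ha.2 b h hb.1
  have hchi_sum : ∀ ε, ∑ a, (E a).indicator (fun _ => (1:ℝ)) ε = 1 := by
    intro ε
    obtain ⟨a0, ha0⟩ := attain ε
    rw [Finset.sum_eq_single a0]
    · rw [Set.indicator_of_mem ha0]
    · intro b _ hb
      refine Set.indicator_of_notMem (fun hmem => hb (unique ε b a0 hmem ha0)) _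
    · exact fun h => absurd (Finset.mem_univ a0) h
  have hM_sum : ∀ ε, M ε = ∑ a, (E a).indicator (fun ε' => w a + ε' a) ε := by
    intro ε
    obtain ⟨a0, ha0⟩ := attain ε
    rw [Finset.sum_eq_single a0]
    · rw [Set.indicator_of_mem ha0]
      exact ha0.1.symm
    · intro b _ hb
      refine Set.indicator_of_notMem (fun hmem => hb (unique ε b a0 hmem ha0)) _
    · exact fun h => absurd (Finset.mem_univ a0) h
  set p : A → ℝ := fun a => (d (E a)).toReal with hp
  have hp0 : ∀ a, 0 ≤ p a := fun a => ENNReal.toReal_nonneg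
  have hχint : ∀ a, Integrable ((E a).indicator fun _ => (1:ℝ)) d :=
    fun a => (integrable_const (1:ℝ)).indicator (hEmeas a)
  have hpsum : ∑ a, p a = 1 := by
    have h1 : ∀ a, ∫ ε, (E a).indicator (fun _ => (1:ℝ)) ε ∂d = p a := by
      intro a
      rw [integral_indicator_const _ (hEmeas a), smul_eq_mul, mul_one]
      rfl
    calc ∑ a, p a = ∑ a, ∫ ε, (E a).indicator (fun _ => (1:ℝ)) ε ∂d :=
          Finset.sum_congr rfl fun a _ => (h1 a).symm
      _ = ∫ ε, ∑ a, (E a).indicator (fun _ => (1:ℝ)) ε ∂d :=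
          (integral_finset_sum _ (fun a _ => hχint a)).symm
      _ = ∫ _ε, (1:ℝ) ∂d := by
          congr 1
          funext ε
          exact hchi_sum ε
      _ = 1 := by simp
  have hIwa : ∀ a, Integrable (fun ε : A → ℝ => w a + ε a) d :=
    fun a => (integrable_const (w a)).add (hmom a).1
  have hIa : ∀ a, Integrable ((E a).indicator fun ε' : A → ℝ => w a + ε' a) d :=
    fun a => (hIwa a).indicator (hEmeas a)
  refine ⟨p, ⟨hp0, hpsum⟩, ?_⟩
  have hMrepr : ∫ ε, M ε ∂d = ∑ a, ∫ ε, (E a).indicator (fun ε' => w a + ε' a) ε ∂d := by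
    rw [← integral_finset_sum _ (fun a _ => hIa a)]
    congr 1
    funext ε
    exact hM_sum ε
  rw [hMrepr]
  refine Finset.sum_le_sum fun a _ => ?_
  obtain ⟨hI1, hmean, hI2, hvar⟩ := hmom a
  have hset : ∫ ε, (E a).indicator (fun ε' => w a + ε' a) ε ∂d
      = p a * w a + ∫ ε in E a, ε a ∂d := by
    rw [integral_indicator (hEmeas a),
      integral_add (integrableOn_const (C := w a) (measure_ne_top d _)) (hI1.integrableOn),
      setIntegral_const, smul_eq_mul, mul_comm]
    simp only [hp, measureReal_def]
    ring
  rw [hset]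
  have hcs := key_cs d (fun ε => ε a) hI1 hI2 hmean (σ a) (hσ a) hvar (E a) (hEmeas a)
  linarith

lemma bound_T {A : Type*} [Fintype A] [Nonempty A]
    (w : A → ℝ) (σ : A → ℝ) (hσ : ∀ a, 0 ≤ σ a) (π : A → ℝ)
    (hπ0 : ∀ a, 0 ≤ π a) (hπ1 : ∑ a, π a = 1) :
    ∑ a, (π a * w a + σ a * Real.sqrt (π a * (1 - π a))) ≤ ∑ a, (|w a| + σ a) := by
  refine Finset.sum_le_sum fun a _ => ?_
  have hle1 : π a ≤ 1 := by
    calc π a ≤ ∑ b, π b := Finset.single_le_sum (fun b _ => hπ0 b) (Finset.mem_univ a)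
      _ = 1 := hπ1
  have h1 : π a * w a ≤ |w a| := by
    calc π a * w a ≤ π a * |w a| := mul_le_mul_of_nonneg_left (le_abs_self _) (hπ0 a)
      _ ≤ 1 * |w a| := mul_le_mul_of_nonneg_right hle1 (abs_nonneg _)
      _ = |w a| := one_mul _
  have h2 : Real.sqrt (π a * (1 - π a)) ≤ 1 := by
    have := Real.sqrt_le_sqrt (show π a * (1 - π a) ≤ 1 by nlinarith [hπ0 a, hle1])
    rwa [Real.sqrt_one] at this
  have h3 : σ a * Real.sqrt (π a * (1 - π a)) ≤ σ a := by
    calc σ a * Real.sqrt (π a * (1 - π a)) ≤ σ a * 1 :=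
        mul_le_mul_of_nonneg_left h2 (hσ a)
      _ = σ a := mul_one _
  linarith


/-- marginal moment ambiguity set: for `σ a ≥ 0`, the tight distributionally
robust bound `sup_d ∫ max_a (w a + ε a) dd(ε)` over all Borel probability measures on `ℝ^A`
whose marginals have mean `0` and second moment `(σ a)²` equals
`max_{π ∈ Δ_A} Σ_a (π a · w a + σ a · √(π a (1 − π a)))`; i.e. the DS-MDP model with
zero-mean marginal-moment ambiguity is equivalent to the regularized MDP model with
regularizer `φ(π) = Σ_a σ a √(π a (1 − π a))`. -/
theorem marginal_moment_dro_eq_regularized {A : Type*} [Fintype A] [Nonempty A]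
    (w : A → ℝ) (σ : A → ℝ) (hσ : ∀ a, 0 ≤ σ a) :
    sSup {x : ℝ | ∃ d : Measure (A → ℝ), IsProbabilityMeasure d ∧
        (∀ a : A, Integrable (fun ε : A → ℝ => ε a) d ∧ (∫ ε, ε a ∂d) = 0 ∧
          Integrable (fun ε : A → ℝ => (ε a) ^ 2) d ∧ (∫ ε, (ε a) ^ 2 ∂d) = (σ a) ^ 2) ∧
        x = ∫ ε, (Finset.univ.sup' Finset.univ_nonempty (fun a : A => w a + ε a)) ∂d} =
      sSup {x : ℝ | ∃ π : A → ℝ, ((∀ a, 0 ≤ π a) ∧ ∑ a, π a = 1) ∧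
        x = ∑ a, (π a * w a + σ a * Real.sqrt (π a * (1 - π a)))} := by
  classical
  set S := {x : ℝ | ∃ d : Measure (A → ℝ), IsProbabilityMeasure d ∧
      (∀ a : A, Integrable (fun ε : A → ℝ => ε a) d ∧ (∫ ε, ε a ∂d) = 0 ∧
        Integrable (fun ε : A → ℝ => (ε a) ^ 2) d ∧ (∫ ε, (ε a) ^ 2 ∂d) = (σ a) ^ 2) ∧
      x = ∫ ε, (Finset.univ.sup' Finset.univ_nonempty (fun a : A => w a + ε a)) ∂d} with hS
  set T := {x : ℝ | ∃ π : A → ℝ, ((∀ a, 0 ≤ π a) ∧ ∑ a, π a = 1) ∧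
      x = ∑ a, (π a * w a + σ a * Real.sqrt (π a * (1 - π a)))} with hT
  -- a particular feasible π
  set π₀ : A → ℝ := fun a => if a = Classical.arbitrary A then 1 else 0 with hπ₀
  have hπ₀0 : ∀ a, 0 ≤ π₀ a := fun a => by rw [hπ₀]; dsimp only; split <;> norm_num
  have hπ₀1 : ∑ a, π₀ a = 1 := by rw [hπ₀]; simp
  have hTne : T.Nonempty := ⟨_, π₀, ⟨hπ₀0, hπ₀1⟩, rfl⟩
  have hTbdd : BddAbove T := by
    refine ⟨∑ a, (|w a| + σ a), fun y hy => ?_⟩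
    obtain ⟨π, ⟨h0, h1⟩, rfl⟩ := hy
    exact bound_T w σ hσ π h0 h1
  have hSne : S.Nonempty := by
    obtain ⟨d, hdp, hmomd, _⟩ := construction w σ hσ π₀ hπ₀0 hπ₀1
    exact ⟨_, d, hdp, hmomd, rfl⟩
  have hSbdd : BddAbove S := by
    refine ⟨∑ a, (|w a| + σ a), fun x hx => ?_⟩
    obtain ⟨d, hdp, hmomd, rfl⟩ := hx
    obtain ⟨π, ⟨h0, h1⟩, hle⟩ := upper_bound w σ hσ d hdp hmomd
    exact hle.trans (bound_T w σ hσ π h0 h1)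
  apply le_antisymm
  · refine csSup_le hSne ?_
    rintro x ⟨d, hdp, hmomd, rfl⟩
    obtain ⟨π, hπc, hle⟩ := upper_bound w σ hσ d hdp hmomd
    exact hle.trans (le_csSup hTbdd ⟨π, hπc, rfl⟩)
  · refine csSup_le hTne ?_
    rintro y ⟨π, ⟨h0, h1⟩, rfl⟩
    obtain ⟨d, hdp, hmomd, hge⟩ := construction w σ hσ π h0 h1
    exact hge.trans (le_csSup hSbdd ⟨d, hdp, hmomd, rfl⟩)
end
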